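/- arXiv:1212.4908 — 6 statements merged into one kernel-verified Lean document; each statement's English description precedes it below -/
import Mathlib

section
/- Let G = (V,E) and G† = (V†,E†) be finite graphs, p, p* ∈ (0,1), q > 0, and e ↦ e† a bijection from E to E† such that, with A† := {e† : e ∈ E∖A}, the random-cluster measures satisfy μ_{p,q}^G(A) = μ_{p*,q}^{G†}(A†) for all A ⊆ E (as holds when G† is the planar dual of a connected planar graph G and p*/(1−p*) = q(1−p)/p). Then the heat-bath dynamics for the two random-cluster models have equal spectral gaps: λ(P̃_HB^{G,p,q}) = λ(P̃_HB^{G†,p*,q}). -/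
open Finset

noncomputable section

/-- `ξ` is an eigenvalue of the kernel `P` on the finite state space `Ω`. -/
def IsEigenvalue {Ω : Type*} [Fintype Ω] (P : Ω → Ω → ℝ) (ξ : ℝ) : Prop :=
  ∃ f : Ω → ℝ, f ≠ 0 ∧ ∀ x, (∑ y, P x y * f y) = ξ * f x

/-- The (absolute) spectral gap: `1` minus the largest absolute value of an
eigenvalue different from `1`. -/
def spectralGap {Ω : Type*} [Fintype Ω] (P : Ω → Ω → ℝ) : ℝ :=
  1 - sSup {r : ℝ | ∃ ξ : ℝ, IsEigenvalue P ξ ∧ ξ ≠ 1 ∧ r = |ξ|}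

variable {V E : Type*}

/-- The graph on the vertex set `V` induced by the edges in `A` (a multigraph
`(V, E)` is described by the map `ends` sending an edge to its two endpoints). -/
def subGraph (ends : E → V × V) (A : Finset E) : SimpleGraph V :=
  SimpleGraph.fromRel fun a b => ∃ e ∈ A, ends e = (a, b) ∨ ends e = (b, a)

/-- `c(A)`: the number of connected components of the spanning subgraph `(V, A)`. -/
def compCount (ends : E → V × V) (A : Finset E) : ℕ :=
  Nat.card (subGraph ends A).ConnectedComponent

/-- The endpoints of the edge `e` are connected in the spanning subgraph `(V, A)`. -/
def connectedIn (ends : E → V × V) (A : Finset E) (e : E) : Prop :=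
  (subGraph ends A).Reachable (ends e).1 (ends e).2

/-- The degree of the vertex `v` in the multigraph `(V, E)`. -/
def degree [Fintype E] [DecidableEq V] (ends : E → V × V) (v : V) : ℕ :=
  (univ.filter fun e => (ends e).1 = v ∨ (ends e).2 = v).card

/-- `E(σ)`: the set of edges whose endpoints receive the same color in `σ`. -/
def agreeSet [Fintype E] {q : ℕ} (ends : E → V × V) (σ : V → Fin q) : Finset E :=
  univ.filter fun e => σ (ends e).1 = σ (ends e).2

/-- Unnormalized random-cluster weight `(p/(1-p))^{|A|} q^{c(A)}`. -/
def rcWeight [Fintype E] (ends : E → V × V) (p q : ℝ) (A : Finset E) : ℝ :=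
  (p / (1 - p)) ^ A.card * q ^ compCount ends A

/-- The random-cluster measure on `G` with parameters `p` and `q`. -/
def rcMu [Fintype E] (ends : E → V × V) (p q : ℝ) (A : Finset E) : ℝ :=
  rcWeight ends p q A / ∑ B : Finset E, rcWeight ends p q B

/-- Transition matrix of the Swendsen–Wang dynamics for the random-cluster model. -/
def PSWRC [Fintype V] [DecidableEq V] [Fintype E] [DecidableEq E]
    (ends : E → V × V) (p : ℝ) (q : ℕ) (A B : Finset E) : ℝ :=
  ((q : ℝ) ^ compCount ends A)⁻¹ * (p / (1 - p)) ^ B.card *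
    ∑ σ : V → Fin q, (1 - p) ^ (agreeSet ends σ).card *
      (if A ∪ B ⊆ agreeSet ends σ then 1 else 0)

open scoped Classical in
/-- Transition matrix of the single-bond dynamics for the random-cluster model. -/
def PSBRC [Fintype E] [DecidableEq E] (ends : E → V × V) (p q : ℝ) (A B : Finset E) : ℝ :=
  (Fintype.card E : ℝ)⁻¹ * ∑ e : E,
    if connectedIn ends A e then
      (if B = insert e A then p else 0) + (if B = A.erase e then 1 - p else 0)
    else
      (if B = insert e A then p / q else 0) + (if B = A.erase e then 1 - p / q else 0)

/-- Transition matrix of the heat-bath dynamics for the random-cluster model. -/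
def PHBRC [Fintype E] [DecidableEq E] (ends : E → V × V) (p q : ℝ) (A B : Finset E) : ℝ :=
  (Fintype.card E : ℝ)⁻¹ * ∑ e : E,
    (rcMu ends p q B / (rcMu ends p q (insert e A) + rcMu ends p q (A.erase e))) *
      (if B.erase e = A.erase e then 1 else 0)

/-!
The dual map `A ↦ A†` is a bijection of state spaces carrying `μ` to `μ†`. The heat-bath
update at `e` depends only on `μ` restricted to the pair `{A ∪ {e}, A ∖ {e}}`, and the dual map
sends this pair to the corresponding pair at `e†` (swapping its members). Hence the two kernels
are conjugate by a permutation of the state space and have the same eigenvalues.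
-/

namespace Finset

variable {α : Type*} [DecidableEq α]

theorem insert_eq_insert_iff_erase_eq_erase {a : α} {s t : Finset α} :
    insert a s = insert a t ↔ s.erase a = t.erase a := by
  simp only [Finset.ext_iff, mem_insert, mem_erase]
  refine forall_congr' fun x => ?_
  by_cases hx : x = a <;> simp [hx]

end Finset

section Relabel

variable {Ω Ω' : Type*} [Fintype Ω] [Fintype Ω']

theorem IsEigenvalue.comp_equiv {P' : Ω' → Ω' → ℝ} {ξ : ℝ} (Φ : Ω ≃ Ω')
    (h : IsEigenvalue (fun a b => P' (Φ a) (Φ b)) ξ) : IsEigenvalue P' ξ := by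
  obtain ⟨f, hf, hfξ⟩ := h
  refine ⟨f ∘ Φ.symm, fun h0 => hf (funext fun a => by simpa using congrFun h0 (Φ a)), fun x => ?_⟩
  simpa [← Φ.sum_comp] using hfξ (Φ.symm x)

theorem isEigenvalue_comp_equiv_iff (P' : Ω' → Ω' → ℝ) (ξ : ℝ) (Φ : Ω ≃ Ω') :
    IsEigenvalue (fun a b => P' (Φ a) (Φ b)) ξ ↔ IsEigenvalue P' ξ :=
  ⟨IsEigenvalue.comp_equiv Φ, fun h => IsEigenvalue.comp_equiv Φ.symm (by simpa using h)⟩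

theorem spectralGap_comp_equiv (P' : Ω' → Ω' → ℝ) (Φ : Ω ≃ Ω') :
    spectralGap (fun a b => P' (Φ a) (Φ b)) = spectralGap P' := by
  simp only [spectralGap, isEigenvalue_comp_equiv_iff]

end Relabel

section HeatBath

variable {E E' : Type*} [Fintype E] [DecidableEq E]

def heatBath (μ : Finset E → ℝ) (A B : Finset E) : ℝ :=
  (Fintype.card E : ℝ)⁻¹ * ∑ e : E,
    (μ B / (μ (insert e A) + μ (A.erase e))) * (if B.erase e = A.erase e then 1 else 0)

theorem PHBRC_eq_heatBath {V : Type*} (ends : E → V × V) (p q : ℝ) :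
    PHBRC ends p q = heatBath (rcMu ends p q) :=
  rfl

theorem heatBath_compl (μ : Finset E → ℝ) (A B : Finset E) :
    heatBath μ Aᶜ Bᶜ = heatBath (fun C => μ Cᶜ) A B := by
  refine congrArg _ (sum_congr rfl fun e _ => ?_)
  simp only [← compl_erase, ← compl_insert, compl_inj_iff, insert_eq_insert_iff_erase_eq_erase,
    add_comm (μ (insert e A)ᶜ)]

/-- The duality `A ↦ A† = {e† : e ∉ A}` on edge sets. -/
def dualEquiv (d : E ≃ E') : Finset E ≃ Finset E' :=
  (Function.Involutive.toPerm _ compl_involutive).trans d.finsetCongr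

theorem dualEquiv_apply (d : E ≃ E') (A : Finset E) : dualEquiv d A = Aᶜ.map d.toEmbedding :=
  rfl

variable [Fintype E'] [DecidableEq E']

theorem heatBath_map (d : E ≃ E') (μ : Finset E' → ℝ) (A B : Finset E) :
    heatBath μ (A.map d.toEmbedding) (B.map d.toEmbedding) =
      heatBath (fun C => μ (C.map d.toEmbedding)) A B := by
  rw [heatBath, heatBath, Fintype.card_congr d.symm, ← d.sum_comp]
  refine congrArg _ (sum_congr rfl fun e _ => ?_)
  have hd : d e = d.toEmbedding e := rfl
  simp only [hd, ← map_insert, ← map_erase, map_inj]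

theorem heatBath_dualEquiv (d : E ≃ E') (μ : Finset E → ℝ) (μ' : Finset E' → ℝ)
    (hμ : ∀ A, μ A = μ' (dualEquiv d A)) (A B : Finset E) :
    heatBath μ' (dualEquiv d A) (dualEquiv d B) = heatBath μ A B := by
  rw [dualEquiv_apply, dualEquiv_apply, heatBath_map, heatBath_compl]
  exact congrArg (heatBath · A B) (funext fun C => (hμ C).symm)

end HeatBath

theorem hb_rc_gap_dual_eq_general
    {V E V' E' : Type*} [Fintype E] [DecidableEq E]
    [Fintype E'] [DecidableEq E']
    (ends : E → V × V) (ends' : E' → V' × V')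
    (p ps q : ℝ)
    (d : E ≃ E')
    (hμ : ∀ A : Finset E, rcMu ends p q A = rcMu ends' ps q (Aᶜ.map d.toEmbedding)) :
    spectralGap (PHBRC ends p q) = spectralGap (PHBRC ends' ps q) := by
  have hkernel : PHBRC ends p q = fun A B => PHBRC ends' ps q (dualEquiv d A) (dualEquiv d B) := by
    funext A B
    simp only [PHBRC_eq_heatBath]
    exact (heatBath_dualEquiv d _ _ hμ A B).symm
  rw [hkernel, spectralGap_comp_equiv]

/-- If the random-cluster measure of `(G, p, q)` is carried to
that of `(G†, p*, q)` by the dual map `A ↦ A† = {e† : e ∉ A}`, then the heat-bath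
dynamics for the two random-cluster models have equal spectral gaps. -/
theorem hb_rc_gap_dual_eq
    {V E V' E' : Type*} [Fintype V] [DecidableEq V] [Fintype E] [DecidableEq E]
    [Fintype V'] [DecidableEq V'] [Fintype E'] [DecidableEq E']
    (ends : E → V × V) (ends' : E' → V' × V')
    (p ps q : ℝ) (hp : p ∈ Set.Ioo (0 : ℝ) 1) (hps : ps ∈ Set.Ioo (0 : ℝ) 1) (hq : 0 < q)
    (d : E ≃ E')
    (hμ : ∀ A : Finset E, rcMu ends p q A = rcMu ends' ps q (Aᶜ.map d.toEmbedding)) :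
    spectralGap (PHBRC ends p q) = spectralGap (PHBRC ends' ps q) :=
  hb_rc_gap_dual_eq_general ends ends' p ps q d hμ
end
end

section
/- Let G = (V,E) be a finite graph, q ≥ 1 an integer, β > 0 and p := 1 − e^{−β}. Then the Swendsen–Wang dynamics for the q-state Potts model on G at inverse temperature β and the Swendsen–Wang dynamics for the random-cluster model on G with parameters p and q have equal spectral gaps: λ(P_SW) = λ(P̃_SW). -/
/-! Both dynamics compose the same two kernels, in opposite orders: the percolation kernel
`M(σ, A)`, which keeps each edge of `E(σ)` independently with probability `p`, and the colouring
kernel `N(A, σ)`, which colours every component of `(V, A)` uniformly at random. Thus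
`P_SW = M N` and `P̃_SW = N M`. If `M N f = ξ f` with `ξ ≠ 0` and `f ≠ 0`, then `N f ≠ 0` and
`N M (N f) = ξ N f`, so `M N` and `N M` have the same nonzero eigenvalues; the eigenvalue `0`
never changes the spectral gap. -/

open Finset

noncomputable section

variable {V E : Type*}

/-- Unnormalized Potts weight `e^{β |E(σ)|}`. -/
def pottsWeight [Fintype E] (ends : E → V × V) (q : ℕ) (β : ℝ) (σ : V → Fin q) : ℝ :=
  Real.exp (β * (agreeSet ends σ).card)

/-- The `q`-state Potts measure on `G` at inverse temperature `β`. -/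
def pottsPi [Fintype V] [DecidableEq V] [Fintype E] (ends : E → V × V) (q : ℕ) (β : ℝ)
    (σ : V → Fin q) : ℝ :=
  pottsWeight ends q β σ / ∑ τ : V → Fin q, pottsWeight ends q β τ

/-- Transition matrix of the heat-bath (Glauber) dynamics for the Potts model. -/
def PHB [Fintype V] [DecidableEq V] [Fintype E] (ends : E → V × V) (q : ℕ) (β : ℝ)
    (σ τ : V → Fin q) : ℝ :=
  (Fintype.card V : ℝ)⁻¹ * ∑ v : V,
    (pottsPi ends q β τ / ∑ l : Fin q, pottsPi ends q β (Function.update σ v l)) *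
      (if ∃ k : Fin q, τ = Function.update σ v k then 1 else 0)

/-- Transition matrix of the Swendsen–Wang dynamics for the Potts model,
with `p = 1 - e^{-β}`. -/
def PSW [Fintype V] [Fintype E] [DecidableEq E] (ends : E → V × V) (q : ℕ) (β : ℝ)
    (σ τ : V → Fin q) : ℝ :=
  ∑ A ∈ (agreeSet ends σ ∩ agreeSet ends τ).powerset,
    (1 - Real.exp (-β)) ^ A.card * (Real.exp (-β)) ^ ((agreeSet ends σ).card - A.card) *
      ((q : ℝ) ^ compCount ends A)⁻¹

theorem Real.sSup_insert_zero {s : Set ℝ} (hs : ∀ r ∈ s, 0 ≤ r) : sSup (insert 0 s) = sSup s := by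
  rcases s.eq_empty_or_nonempty with rfl | hne
  · simp
  by_cases hb : BddAbove s
  · rw [csSup_insert hb hne, sup_eq_right]
    obtain ⟨r, hr⟩ := hne
    exact (hs r hr).trans (le_csSup hb hr)
  · rw [Real.sSup_of_not_bddAbove hb, Real.sSup_of_not_bddAbove (by rwa [bddAbove_insert])]

theorem Real.sSup_eq_of_insert_zero_eq {s t : Set ℝ} (hs : ∀ r ∈ s, 0 ≤ r) (ht : ∀ r ∈ t, 0 ≤ r)
    (h : insert 0 s = insert 0 t) : sSup s = sSup t := by
  rw [← Real.sSup_insert_zero hs, h, Real.sSup_insert_zero ht]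

section Kernel

open Matrix

variable {Ω Ω' : Type*} [Fintype Ω] [Fintype Ω']

theorem isEigenvalue_iff_mulVec (P : Matrix Ω Ω ℝ) (ξ : ℝ) :
    IsEigenvalue P ξ ↔ ∃ f ≠ 0, P *ᵥ f = ξ • f := by
  simp only [IsEigenvalue, funext_iff, mulVec, dotProduct, Pi.smul_apply, smul_eq_mul]

theorem IsEigenvalue.mul_comm {M : Matrix Ω Ω' ℝ} {N : Matrix Ω' Ω ℝ} {ξ : ℝ} (hξ : ξ ≠ 0)
    (h : IsEigenvalue (M * N) ξ) : IsEigenvalue (N * M) ξ := by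
  rw [isEigenvalue_iff_mulVec] at h ⊢
  obtain ⟨f, hf, hMN⟩ := h
  have hM : M *ᵥ (N *ᵥ f) = ξ • f := by rw [mulVec_mulVec, hMN]
  refine ⟨N *ᵥ f, fun h0 => hf ?_, ?_⟩
  · simpa [h0, hξ] using hM.symm
  · rw [← mulVec_mulVec, hM, mulVec_smul]

theorem isEigenvalue_mul_comm_iff (M : Matrix Ω Ω' ℝ) (N : Matrix Ω' Ω ℝ) {ξ : ℝ}
    (hξ : ξ ≠ 0) : IsEigenvalue (M * N) ξ ↔ IsEigenvalue (N * M) ξ :=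
  ⟨IsEigenvalue.mul_comm hξ, IsEigenvalue.mul_comm hξ⟩

theorem spectralGap_congr {P : Ω → Ω → ℝ} {Q : Ω' → Ω' → ℝ}
    (h : ∀ ξ ≠ 0, IsEigenvalue P ξ ↔ IsEigenvalue Q ξ) : spectralGap P = spectralGap Q := by
  refine congrArg (1 - ·) (Real.sSup_eq_of_insert_zero_eq ?_ ?_ ?_)
  · rintro _ ⟨ξ, -, -, rfl⟩
    exact abs_nonneg ξ
  · rintro _ ⟨ξ, -, -, rfl⟩
    exact abs_nonneg ξ
  ext r
  simp only [Set.mem_insert_iff, Set.mem_ofPred_eq]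
  refine or_congr_right' fun hr => exists_congr fun ξ => ?_
  rcases eq_or_ne ξ 0 with rfl | hξ
  · simp [hr]
  · rw [h ξ hξ]

theorem spectralGap_mul_comm (M : Matrix Ω Ω' ℝ) (N : Matrix Ω' Ω ℝ) :
    spectralGap (M * N) = spectralGap (N * M) :=
  spectralGap_congr fun _ hξ => isEigenvalue_mul_comm_iff M N hξ

end Kernel

section SwendsenWang

open Matrix

variable [Fintype V] [Fintype E] [DecidableEq E] (ends : E → V × V) (q : ℕ)

def percolationKernel (p : ℝ) : Matrix (V → Fin q) (Finset E) ℝ :=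
  of fun σ A => if A ⊆ agreeSet ends σ then
    p ^ A.card * (1 - p) ^ ((agreeSet ends σ).card - A.card) else 0

def colouringKernel : Matrix (Finset E) (V → Fin q) ℝ :=
  of fun A σ => if A ⊆ agreeSet ends σ then ((q : ℝ) ^ compCount ends A)⁻¹ else 0

theorem PSW_eq_mul (β : ℝ) :
    PSW ends q β = percolationKernel ends q (1 - Real.exp (-β)) * colouringKernel ends q := by
  ext σ τ
  simp only [PSW, mul_apply, percolationKernel, colouringKernel, of_apply, sub_sub_cancel,
    ite_zero_mul_ite_zero, ← subset_inter_iff]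
  simp only [← mem_powerset, sum_ite_mem, univ_inter]

theorem PSWRC_eq_mul [DecidableEq V] {p : ℝ} (hp : p ≠ 1) :
    PSWRC ends p q = colouringKernel ends q * percolationKernel ends q p := by
  ext A B
  simp only [PSWRC, mul_apply, percolationKernel, colouringKernel, of_apply, ite_zero_mul_ite_zero,
    mul_sum, union_subset_iff]
  simp only [mul_ite, mul_one, mul_zero]
  refine sum_congr rfl fun σ _ => if_ctx_congr Iff.rfl (fun h => ?_) fun _ => rfl
  rw [div_pow, pow_sub₀ _ (sub_ne_zero.2 hp.symm) (card_le_card h.2)]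
  ring

end SwendsenWang

theorem sw_potts_rc_gap_eq_general
    {V E : Type*} [Fintype V] [DecidableEq V] [Fintype E] [DecidableEq E]
    (ends : E → V × V) (q : ℕ) (β : ℝ) :
    spectralGap (PSW ends q β) = spectralGap (PSWRC ends (1 - Real.exp (-β)) q) := by
  have hp : 1 - Real.exp (-β) ≠ 1 := by simp [Real.exp_ne_zero]
  rw [PSW_eq_mul, PSWRC_eq_mul ends q hp]
  exact spectralGap_mul_comm _ _

/-- The Swendsen–Wang dynamics for the `q`-state Potts model at
inverse temperature `β` and the Swendsen–Wang dynamics for the random-cluster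
model with parameters `p = 1 − e^{−β}` and `q` have equal spectral gaps. -/
theorem sw_potts_rc_gap_eq
    {V E : Type*} [Fintype V] [DecidableEq V] [Fintype E] [DecidableEq E]
    (ends : E → V × V) (q : ℕ) (hq : 1 ≤ q) (β : ℝ) (hβ : 0 < β) :
    spectralGap (PSW ends q β) = spectralGap (PSWRC ends (1 - Real.exp (-β)) q) :=
  sw_potts_rc_gap_eq_general ends q β
end
end

section
/- Let G = (V,E) be a finite graph, p ∈ (0,1), and q ≥ 1 a real parameter. Then the heat-bath and single-bond dynamics for the random-cluster model on G with parameters p and q satisfy (1 − p(1 − 1/q)) · λ(P̃_HB) ≤ λ(P̃_SB) ≤ λ(P̃_HB). -/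
open Finset

noncomputable section

variable {V E : Type*}

/-!
Both dynamics average, over the edges `e`, single-edge kernels that are reversible for the
random-cluster measure `μ` and only move between `A \ {e}` and `A ∪ {e}`. Adding `e` to `A`
keeps or merges two components, so `μ (A ∪ {e}) * (1 - p) = μ A * r` with `r = p` if the
endpoints of `e` are connected in `A` and `r = p / q` otherwise. The single-bond conductance
between `A` and `A ∪ {e}` is then `1 - p + r ∈ [1 - p (1 - 1/q), 1]` times the heat-bath one,
whence `γ 𝓔_HB ≤ 𝓔_SB ≤ 𝓔_HB` for the Dirichlet forms, with `γ = 1 - p (1 - 1/q)`.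

Both chains are irreducible, since every single flip has positive probability, and positive
semidefinite: the heat-bath edge kernels are `μ`-orthogonal projections, and
`⟨f, P_SB f⟩ = ‖f‖² - 𝓔_SB f ≥ ‖f‖² - 𝓔_HB f = ⟨f, P_HB f⟩`. For such a chain `1 - λ(P)` is the
largest eigenvalue of `P` on the `μ`-orthogonal complement of the constants: it is attained by an
eigenvector and it bounds the Rayleigh quotient there, by the spectral theorem for the symmetric
matrix `D^{1/2} P D^{-1/2}`, `D = diag μ`. Comparing Rayleigh quotients compares the gaps.
-/

open scoped RealInnerProductSpace

theorem LinearMap.IsSymmetric.inner_map_self_le {F : Type*} [NormedAddCommGroup F]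
    [InnerProductSpace ℝ F] [FiniteDimensional ℝ F] {T : F →ₗ[ℝ] F} (hT : T.IsSymmetric)
    {s : ℝ} {v : F} (h : ∀ (ξ : ℝ) (u : F), T u = ξ • u → ⟪u, v⟫ ≠ 0 → ξ ≤ s) :
    ⟪v, T v⟫ ≤ s * ⟪v, v⟫ := by
  set b := hT.eigenvectorBasis rfl
  have hexpand : ∀ w : F, ⟪v, w⟫ = ∑ i, ⟪b i, w⟫ * ⟪b i, v⟫ := fun w => by
    simp_rw [← b.sum_inner_mul_inner v w, real_inner_comm v, mul_comm]
  rw [hexpand, hexpand, Finset.mul_sum]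
  refine Finset.sum_le_sum fun i _ => ?_
  have hb : T (b i) = hT.eigenvalues rfl i • b i := hT.apply_eigenvectorBasis rfl i
  rw [← hT, hb, real_inner_smul_left, mul_assoc]
  by_cases hv : ⟪b i, v⟫ = 0
  · simp [hv]
  · exact mul_le_mul_of_nonneg_right (h _ _ hb hv) (mul_self_nonneg _)

section Kernel

variable {Ω : Type*} [Fintype Ω]

def kernelForm (μ : Ω → ℝ) (P : Ω → Ω → ℝ) (f g : Ω → ℝ) : ℝ :=
  ∑ x, μ x * f x * ∑ y, P x y * g y

def weightedNormSq (μ f : Ω → ℝ) : ℝ :=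
  ∑ x, μ x * f x ^ 2

def dirichletForm (μ : Ω → ℝ) (P : Ω → Ω → ℝ) (f : Ω → ℝ) : ℝ :=
  (∑ x, ∑ y, μ x * P x y * (f x - f y) ^ 2) / 2

/-- Second largest eigenvalue modulus. -/
def slem (P : Ω → Ω → ℝ) : ℝ :=
  sSup {r : ℝ | ∃ ξ : ℝ, IsEigenvalue P ξ ∧ ξ ≠ 1 ∧ r = |ξ|}

structure IsReversiblePSD (μ : Ω → ℝ) (P : Ω → Ω → ℝ) : Prop where
  row_sum : ∀ x, ∑ y, P x y = 1
  reversible : ∀ x y, μ x * P x y = μ y * P y x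
  /-- irreducibility -/
  harmonic_const : ∀ f : Ω → ℝ, (∀ x, ∑ y, P x y * f y = f x) → ∀ x y, f x = f y
  form_nonneg : ∀ f, 0 ≤ kernelForm μ P f f

variable {μ : Ω → ℝ} {P Q : Ω → Ω → ℝ}

theorem spectralGap_eq_one_sub_slem (P : Ω → Ω → ℝ) : spectralGap P = 1 - slem P := rfl

theorem finite_isEigenvalue (P : Ω → Ω → ℝ) : {ξ | IsEigenvalue P ξ}.Finite := by
  refine (Module.End.finite_hasEigenvalue (Matrix.mulVecLin P)).subset fun ξ ⟨f, hf0, hf⟩ => ?_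
  refine Module.End.hasEigenvalue_of_hasEigenvector ⟨Module.End.mem_eigenspace_iff.2 ?_, hf0⟩
  ext x
  exact hf x

theorem finite_abs_isEigenvalue_ne_one (P : Ω → Ω → ℝ) :
    {r : ℝ | ∃ ξ : ℝ, IsEigenvalue P ξ ∧ ξ ≠ 1 ∧ r = |ξ|}.Finite := by
  refine ((finite_isEigenvalue P).image abs).subset ?_
  rintro _ ⟨ξ, hξ, -, rfl⟩
  exact ⟨ξ, hξ, rfl⟩

theorem le_slem {ξ : ℝ} (hξ : IsEigenvalue P ξ) (h1 : ξ ≠ 1) : |ξ| ≤ slem P :=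
  le_csSup (finite_abs_isEigenvalue_ne_one P).bddAbove ⟨ξ, hξ, h1, rfl⟩

theorem slem_nonneg (P : Ω → Ω → ℝ) : 0 ≤ slem P :=
  Real.sSup_nonneg fun _ ⟨_, _, _, hr⟩ => hr ▸ abs_nonneg _

theorem slem_eq_zero_or_exists (P : Ω → Ω → ℝ) :
    slem P = 0 ∨ ∃ ξ, IsEigenvalue P ξ ∧ ξ ≠ 1 ∧ slem P = |ξ| := by
  set S := {r : ℝ | ∃ ξ : ℝ, IsEigenvalue P ξ ∧ ξ ≠ 1 ∧ r = |ξ|}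
  rcases S.eq_empty_or_nonempty with hS | hS
  · exact Or.inl (by change sSup S = 0; rw [hS, Real.sSup_empty])
  · exact Or.inr (hS.csSup_mem (finite_abs_isEigenvalue_ne_one P))

theorem spectralGap_zero : spectralGap (fun _ _ : Ω => (0 : ℝ)) = 1 := by
  rw [spectralGap_eq_one_sub_slem, sub_eq_self]
  rcases slem_eq_zero_or_exists (fun _ _ : Ω => (0 : ℝ)) with h | ⟨ξ, ⟨f, hf0, hf⟩, -, h⟩
  · exact h
  · obtain ⟨x, hx⟩ := Function.ne_iff.1 hf0
    have hξ : ξ = 0 := (mul_eq_zero.1 (by simpa using (hf x).symm)).resolve_right hx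
    rw [h, hξ, abs_zero]

theorem kernelForm_comm (hrev : ∀ x y, μ x * P x y = μ y * P y x) (f g : Ω → ℝ) :
    kernelForm μ P f g = kernelForm μ P g f := by
  simp only [kernelForm, Finset.mul_sum]
  rw [Finset.sum_comm]
  refine Finset.sum_congr rfl fun x _ => Finset.sum_congr rfl fun y _ => ?_
  linear_combination f y * g x * hrev y x

theorem kernelForm_eq_sub_dirichletForm (hrow : ∀ x, ∑ y, P x y = 1)
    (hrev : ∀ x y, μ x * P x y = μ y * P y x) (f : Ω → ℝ) :
    kernelForm μ P f f = weightedNormSq μ f - dirichletForm μ P f := by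
  have hdiag : ∑ x, ∑ y, μ x * P x y * f x ^ 2 = weightedNormSq μ f := by
    refine Finset.sum_congr rfl fun x _ => ?_
    rw [← mul_one (μ x * f x ^ 2), ← hrow x, Finset.mul_sum]
    exact Finset.sum_congr rfl fun y _ => by ring
  have hdiag' : ∑ x, ∑ y, μ x * P x y * f y ^ 2 = weightedNormSq μ f := by
    rw [Finset.sum_comm, ← hdiag]
    exact Finset.sum_congr rfl fun y _ => Finset.sum_congr rfl fun x _ => by rw [hrev]
  have hsq : ∀ x y, μ x * P x y * (f x - f y) ^ 2 = μ x * P x y * f x ^ 2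
      + μ x * P x y * f y ^ 2 - 2 * (μ x * f x * (P x y * f y)) := fun x y => by ring
  simp_rw [dirichletForm, hsq, Finset.sum_sub_distrib, Finset.sum_add_distrib, hdiag, hdiag',
    ← Finset.mul_sum, kernelForm]
  ring

theorem kernelForm_of_eigenvector {ξ : ℝ} {f : Ω → ℝ}
    (hf : ∀ x, ∑ y, P x y * f y = ξ * f x) : kernelForm μ P f f = ξ * weightedNormSq μ f := by
  simp_rw [kernelForm, weightedNormSq, hf, Finset.mul_sum]
  exact Finset.sum_congr rfl fun x _ => by ring

theorem sum_mul_eq_zero_of_eigenvector (hrow : ∀ x, ∑ y, P x y = 1)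
    (hrev : ∀ x y, μ x * P x y = μ y * P y x) {ξ : ℝ} (hξ : ξ ≠ 1) {f : Ω → ℝ}
    (hf : ∀ x, ∑ y, P x y * f y = ξ * f x) : ∑ x, μ x * f x = 0 := by
  have h : ξ * ∑ x, μ x * f x = ∑ x, μ x * f x :=
    calc ξ * ∑ x, μ x * f x = kernelForm μ P (fun _ => 1) f := by
          simp [kernelForm, hf, Finset.mul_sum, mul_left_comm]
      _ = kernelForm μ P f (fun _ => 1) := kernelForm_comm hrev _ _
      _ = ∑ x, μ x * f x := by simp [kernelForm, hrow]
  have : (ξ - 1) * ∑ x, μ x * f x = 0 := by linarith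
  exact (mul_eq_zero.1 this).resolve_left (sub_ne_zero.2 hξ)

theorem weightedNormSq_pos (hμ : ∀ x, 0 < μ x) {f : Ω → ℝ} (hf : f ≠ 0) :
    0 < weightedNormSq μ f := by
  obtain ⟨x, hx⟩ := Function.ne_iff.1 hf
  exact Finset.sum_pos' (fun y _ => by have := hμ y; positivity)
    ⟨x, Finset.mem_univ x, mul_pos (hμ x) (sq_pos_iff.2 hx)⟩

theorem mul_dirichletForm_le_of_forall_ne {c : ℝ}
    (h : ∀ x y, x ≠ y → c * (μ x * P x y) ≤ μ x * Q x y) (f : Ω → ℝ) :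
    c * dirichletForm μ P f ≤ dirichletForm μ Q f := by
  rw [dirichletForm, dirichletForm, mul_div_assoc', Finset.mul_sum]
  refine div_le_div_of_nonneg_right (Finset.sum_le_sum fun x _ => ?_) zero_le_two
  rw [Finset.mul_sum]
  refine Finset.sum_le_sum fun y _ => ?_
  rcases eq_or_ne x y with rfl | hxy
  · simp
  · rw [← mul_assoc]
    exact mul_le_mul_of_nonneg_right (h x y hxy) (sq_nonneg _)

theorem kernelForm_nonneg_of_idempotent (hμ : ∀ x, 0 ≤ μ x)
    (hrev : ∀ x y, μ x * P x y = μ y * P y x)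
    (hidem : ∀ (f : Ω → ℝ) x, ∑ y, P x y * ∑ z, P y z * f z = ∑ y, P x y * f y)
    (f : Ω → ℝ) : 0 ≤ kernelForm μ P f f := by
  have h : kernelForm μ P f f = kernelForm μ P (fun x => ∑ y, P x y * f y) f := by
    rw [kernelForm_comm hrev (fun x => ∑ y, P x y * f y) f]
    simp only [kernelForm, hidem]
  rw [h]
  exact Finset.sum_nonneg fun x _ => by rw [mul_assoc]; exact mul_nonneg (hμ x) (mul_self_nonneg _)

def symmetrize (μ : Ω → ℝ) (P : Ω → Ω → ℝ) : Matrix Ω Ω ℝ :=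
  Matrix.of fun x y => √(μ x) * P x y / √(μ y)

def sqrtEmbed (μ g : Ω → ℝ) : EuclideanSpace ℝ Ω :=
  WithLp.toLp 2 fun x => √(μ x) * g x

theorem inner_sqrtEmbed (hμ : ∀ x, 0 ≤ μ x) (g h : Ω → ℝ) :
    ⟪sqrtEmbed μ g, sqrtEmbed μ h⟫ = ∑ x, μ x * g x * h x := by
  simp only [sqrtEmbed, EuclideanSpace.inner_toLp_toLp, dotProduct, star_trivial]
  refine Finset.sum_congr rfl fun x _ => ?_
  linear_combination g x * h x * Real.mul_self_sqrt (hμ x)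

omit [Fintype Ω] in
theorem sqrtEmbed_div_sqrt (hμ : ∀ x, 0 < μ x) (u : EuclideanSpace ℝ Ω) :
    sqrtEmbed μ (fun x => u x / √(μ x)) = u := by
  ext x
  have := (Real.sqrt_pos.2 (hμ x)).ne'
  simp only [sqrtEmbed]
  field_simp

section DecidableEq

variable [DecidableEq Ω]

theorem symmetrize_sqrtEmbed (hμ : ∀ x, 0 < μ x) (g : Ω → ℝ) :
    (symmetrize μ P).toEuclideanLin (sqrtEmbed μ g) = sqrtEmbed μ fun x => ∑ y, P x y * g y := by
  ext x
  simp only [sqrtEmbed, Matrix.toLpLin_toLp, Matrix.toLin'_apply, Matrix.mulVec, dotProduct,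
    symmetrize, Matrix.of_apply, Finset.mul_sum]
  refine Finset.sum_congr rfl fun y _ => ?_
  have := (Real.sqrt_pos.2 (hμ y)).ne'
  field_simp

theorem isSymmetric_symmetrize (hμ : ∀ x, 0 < μ x) (hrev : ∀ x y, μ x * P x y = μ y * P y x) :
    (symmetrize μ P).toEuclideanLin.IsSymmetric := by
  classical
  refine Matrix.isSymmetric_toEuclideanLin_iff.2 (Matrix.ext fun x y => ?_)
  have hx := Real.sqrt_pos.2 (hμ x)
  have hy := Real.sqrt_pos.2 (hμ y)
  simp only [symmetrize, Matrix.conjTranspose_apply, Matrix.of_apply, star_trivial]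
  rw [div_eq_div_iff hx.ne' hy.ne']
  linear_combination P y x * Real.mul_self_sqrt (hμ y).le - P x y * Real.mul_self_sqrt (hμ x).le
    + hrev y x

theorem eigenvector_of_symmetrize (hμ : ∀ x, 0 < μ x) {ξ : ℝ} {g : Ω → ℝ}
    (hg : (symmetrize μ P).toEuclideanLin (sqrtEmbed μ g) = ξ • sqrtEmbed μ g) (x : Ω) :
    ∑ y, P x y * g y = ξ * g x := by
  rw [symmetrize_sqrtEmbed hμ] at hg
  have h := congrArg (fun w : EuclideanSpace ℝ Ω => w x) hg
  simp only [sqrtEmbed, PiLp.smul_apply, smul_eq_mul] at h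
  have := (Real.sqrt_pos.2 (hμ x)).ne'
  exact mul_left_cancel₀ this (by linear_combination h)

end DecidableEq

theorem kernelForm_le_slem (hμ : ∀ x, 0 < μ x) (hP : IsReversiblePSD μ P) {f : Ω → ℝ}
    (hf : ∑ x, μ x * f x = 0) : kernelForm μ P f f ≤ slem P * weightedNormSq μ f := by
  classical
  have hμ' : ∀ x, 0 ≤ μ x := fun x => (hμ x).le
  have hTf : kernelForm μ P f f =
      ⟪sqrtEmbed μ f, (symmetrize μ P).toEuclideanLin (sqrtEmbed μ f)⟫ := by
    rw [symmetrize_sqrtEmbed hμ, inner_sqrtEmbed hμ', kernelForm]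
  have hff : weightedNormSq μ f = ⟪sqrtEmbed μ f, sqrtEmbed μ f⟫ := by
    simp only [inner_sqrtEmbed hμ', weightedNormSq, mul_assoc, sq]
  rw [hTf, hff]
  refine (isSymmetric_symmetrize hμ hP.reversible).inner_map_self_le fun ξ u hu huf => ?_
  obtain ⟨g, rfl⟩ : ∃ g, sqrtEmbed μ g = u := ⟨_, sqrtEmbed_div_sqrt hμ u⟩
  rw [inner_sqrtEmbed hμ'] at huf
  have hg := eigenvector_of_symmetrize hμ hu
  -- By irreducibility an eigenvector for `1` is constant, hence `μ`-orthogonal to `f`.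
  have hξ : ξ ≠ 1 := by
    rintro rfl
    obtain ⟨x₀, -, hx₀⟩ := Finset.exists_ne_zero_of_sum_ne_zero huf
    have hconst := hP.harmonic_const g (by simpa using hg)
    refine huf (Eq.trans ?_ (mul_eq_zero_of_right (g x₀) hf))
    rw [Finset.mul_sum]
    exact Finset.sum_congr rfl fun x _ => by rw [hconst x x₀]; ring
  have hg0 : g ≠ 0 := by
    rintro hg0
    simp [hg0] at huf
  exact (le_abs_self ξ).trans (le_slem ⟨g, hg0, hg⟩ hξ)

theorem slem_le_of_kernelForm_le (hμ : ∀ x, 0 < μ x) (hP : IsReversiblePSD μ P)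
    (hQ : IsReversiblePSD μ Q) {a b : ℝ} (ha : 0 ≤ a) (hb : 0 ≤ b)
    (h : ∀ f, kernelForm μ Q f f ≤ a * kernelForm μ P f f + b * weightedNormSq μ f) :
    slem Q ≤ a * slem P + b := by
  -- `slem Q` is attained by an eigenvalue, nonnegative since `Q` is positive semidefinite, whose
  -- eigenvector is `μ`-orthogonal to the constants.
  rcases slem_eq_zero_or_exists Q with h0 | ⟨ξ, ⟨f, hf0, hf⟩, hξ1, hξ⟩
  · rw [h0]
    have := slem_nonneg P
    positivity
  have hN := weightedNormSq_pos hμ hf0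
  have hQf := kernelForm_of_eigenvector (μ := μ) hf
  have hξ0 : 0 ≤ ξ := nonneg_of_mul_nonneg_left (hQf ▸ hQ.form_nonneg f) hN
  rw [hξ, abs_of_nonneg hξ0]
  have hPf := kernelForm_le_slem hμ hP
    (sum_mul_eq_zero_of_eigenvector hQ.row_sum hQ.reversible hξ1 hf)
  refine le_of_mul_le_mul_right ?_ hN
  calc ξ * weightedNormSq μ f ≤ a * kernelForm μ P f f + b * weightedNormSq μ f := hQf ▸ h f
    _ ≤ (a * slem P + b) * weightedNormSq μ f := by nlinarith

theorem mul_spectralGap_le_of_dirichletForm_le (hμ : ∀ x, 0 < μ x) (hP : IsReversiblePSD μ P)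
    (hQ : IsReversiblePSD μ Q) {a : ℝ} (ha0 : 0 ≤ a) (ha1 : a ≤ 1)
    (h : ∀ f, a * dirichletForm μ P f ≤ dirichletForm μ Q f) :
    a * spectralGap P ≤ spectralGap Q := by
  have key : slem Q ≤ a * slem P + (1 - a) := by
    refine slem_le_of_kernelForm_le hμ hP hQ ha0 (sub_nonneg.2 ha1) fun f => ?_
    rw [kernelForm_eq_sub_dirichletForm hP.row_sum hP.reversible,
      kernelForm_eq_sub_dirichletForm hQ.row_sum hQ.reversible]
    linarith [h f]
  rw [spectralGap_eq_one_sub_slem, spectralGap_eq_one_sub_slem]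
  linarith

theorem eq_of_harmonic_of_isMax (hnn : ∀ x y, 0 ≤ P x y) (hrow : ∀ x, ∑ y, P x y = 1)
    {f : Ω → ℝ} (hf : ∀ x, ∑ y, P x y * f y = f x) {x : Ω} (hmax : ∀ y, f y ≤ f x) {y : Ω}
    (hxy : 0 < P x y) : f y = f x := by
  have hsum : ∑ z, P x z * (f x - f z) = 0 := by
    simp [mul_sub, Finset.sum_sub_distrib, ← Finset.sum_mul, hrow, hf]
  have := (Finset.sum_eq_zero_iff_of_nonneg fun z _ =>
    mul_nonneg (hnn x z) (sub_nonneg.2 (hmax z))).1 hsum y (Finset.mem_univ y)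
  linarith [(mul_eq_zero.1 this).resolve_left hxy.ne']

end Kernel

section Average

variable {Ω ι : Type*} [Fintype ι] {μ : Ω → ℝ}

def avgKernel (k : ι → Ω → Ω → ℝ) (x y : Ω) : ℝ :=
  (Fintype.card ι : ℝ)⁻¹ * ∑ i, k i x y

variable {k k' : ι → Ω → Ω → ℝ}

theorem avgKernel_nonneg (hk : ∀ i x y, 0 ≤ k i x y) (x y : Ω) : 0 ≤ avgKernel k x y :=
  mul_nonneg (by positivity) (Finset.sum_nonneg fun i _ => hk i x y)

theorem avgKernel_pos (hk : ∀ i x y, 0 ≤ k i x y) {x y : Ω} (i : ι) (hi : 0 < k i x y) :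
    0 < avgKernel k x y := by
  have : Nonempty ι := ⟨i⟩
  exact mul_pos (by positivity)
    (Finset.sum_pos' (fun j _ => hk j x y) ⟨i, Finset.mem_univ i, hi⟩)

theorem avgKernel_row_sum [Fintype Ω] [Nonempty ι] (hk : ∀ i x, ∑ y, k i x y = 1) (x : Ω) :
    ∑ y, avgKernel k x y = 1 := by
  simp only [avgKernel, ← Finset.mul_sum]
  rw [Finset.sum_comm]
  simp [hk]

theorem avgKernel_reversible (hk : ∀ i x y, μ x * k i x y = μ y * k i y x) (x y : Ω) :
    μ x * avgKernel k x y = μ y * avgKernel k y x := by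
  simp only [avgKernel, mul_left_comm (μ _), Finset.mul_sum, hk]

theorem kernelForm_avgKernel [Fintype Ω] (f g : Ω → ℝ) :
    kernelForm μ (avgKernel k) f g = (Fintype.card ι : ℝ)⁻¹ * ∑ i, kernelForm μ (k i) f g := by
  simp only [kernelForm, avgKernel, Finset.mul_sum, Finset.sum_mul]
  conv_rhs => rw [Finset.sum_comm]
  refine Finset.sum_congr rfl fun x _ => ?_
  rw [Finset.sum_comm]
  exact Finset.sum_congr rfl fun i _ => Finset.sum_congr rfl fun y _ => by ring

theorem mul_avgKernel_le {c : ℝ} {x y : Ω} (h : ∀ i, c * (μ x * k i x y) ≤ μ x * k' i x y) :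
    c * (μ x * avgKernel k x y) ≤ μ x * avgKernel k' x y := by
  have hexp : ∀ k : ι → Ω → Ω → ℝ,
      μ x * avgKernel k x y = (Fintype.card ι : ℝ)⁻¹ * ∑ i, μ x * k i x y := fun k => by
    rw [avgKernel, mul_left_comm, Finset.mul_sum]
  rw [hexp, hexp, mul_left_comm, Finset.mul_sum]
  exact mul_le_mul_of_nonneg_left (Finset.sum_le_sum fun i _ => h i) (by positivity)

theorem avgKernel_of_isEmpty [IsEmpty ι] (k : ι → Ω → Ω → ℝ) :
    avgKernel k = fun _ _ => 0 := by
  funext x y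
  simp [avgKernel]

end Average

section Flips

variable [DecidableEq E]

theorem Finset.erase_eq_erase_iff {e : E} {A B : Finset E} :
    B.erase e = A.erase e ↔ B = insert e A ∨ B = A.erase e := by
  constructor
  · intro h
    by_cases he : e ∈ B
    · left
      rw [← Finset.insert_erase he, h]
      ext; simp; tauto
    · exact Or.inr (by rw [← h, Finset.erase_eq_of_notMem he])
  · rintro (rfl | rfl)
    exacts [Finset.erase_insert_eq_erase A e, Finset.erase_idem]

theorem Finset.insert_ne_erase (e : E) (A : Finset E) : insert e A ≠ A.erase e :=
  fun h => Finset.notMem_erase e A (h ▸ Finset.mem_insert_self e A)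

theorem forall_of_flip {R : Finset E → Finset E → Prop} (e : E)
    (symm : ∀ A B, R A B → R B A) (refl : ∀ A, R A A)
    (far : ∀ A B, B.erase e ≠ A.erase e → R A B) (flip : ∀ A, e ∉ A → R A (insert e A))
    (A B : Finset E) : R A B := by
  by_cases hAB : B.erase e = A.erase e
  swap
  · exact far A B hAB
  rcases Finset.erase_eq_erase_iff.1 hAB with rfl | rfl
  · by_cases he : e ∈ A
    · rw [Finset.insert_eq_of_mem he]
      exact refl A
    · exact flip A he
  · by_cases he : e ∈ A
    · refine symm _ _ ?_
      conv_rhs => rw [← Finset.insert_erase he]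
      exact flip _ (Finset.notMem_erase e A)
    · rw [Finset.erase_eq_of_notMem he]
      exact refl A

theorem harmonic_const_of_flips [Fintype E] {P : Finset E → Finset E → ℝ}
    (hnn : ∀ A B, 0 ≤ P A B) (hrow : ∀ A, ∑ B, P A B = 1)
    (hins : ∀ A e, 0 < P A (insert e A)) (hera : ∀ A e, 0 < P A (A.erase e))
    (f : Finset E → ℝ) (hf : ∀ A, ∑ B, P A B * f B = f A) (A B : Finset E) : f A = f B := by
  obtain ⟨A₀, hA₀⟩ := Finite.exists_max f
  have hmax : ∀ A, f A = f A₀ → ∀ B, 0 < P A B → f B = f A₀ := fun A hA B hB =>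
    (eq_of_harmonic_of_isMax hnn hrow hf (fun C => hA ▸ hA₀ C) hB).trans hA
  have hdown : ∀ A, f A = f A₀ → f ∅ = f A₀ := by
    intro A
    induction A using Finset.induction_on with
    | empty => exact id
    | insert e A he ih =>
      exact fun h => ih (by simpa [Finset.erase_insert he] using hmax _ h _ (hera _ e))
  have hup : ∀ B, f B = f A₀ := by
    intro B
    induction B using Finset.induction_on with
    | empty => exact hdown A₀ rfl
    | insert e B _ ih => exact hmax B ih _ (hins B e)
  rw [hup A, hup B]

end Flips

namespace SimpleGraph

variable {G : SimpleGraph V} {x y : V}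

theorem Reachable.eq_of_forall_adj {β : Sort*} {f : V → β} (hf : ∀ v w, G.Adj v w → f v = f w)
    {a b : V} (h : G.Reachable a b) : f a = f b := by
  obtain ⟨p⟩ := h
  induction p with
  | nil => rfl
  | cons hadj _ ih => exact (hf _ _ hadj).trans ih

theorem reachable_sup_edge (G : SimpleGraph V) (x y : V) : (G ⊔ edge x y).Reachable x y := by
  rcases eq_or_ne x y with rfl | hxy
  · rfl
  · exact Adj.reachable (Or.inr ((edge_adj x y x y).2 ⟨Or.inl ⟨rfl, rfl⟩, hxy⟩))

theorem card_connectedComponent_sup_edge_of_reachable (h : G.Reachable x y) :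
    Nat.card (G ⊔ edge x y).ConnectedComponent = Nat.card G.ConnectedComponent := by
  refine (Nat.card_eq_of_bijective _ ⟨?_, ConnectedComponent.surjective_map_ofLE le_sup_left⟩).symm
  refine ConnectedComponent.ind₂ fun v w hvw => ?_
  refine (ConnectedComponent.exact hvw).eq_of_forall_adj fun a b hab => ?_
  rcases hab with hab | hab
  · exact ConnectedComponent.connectedComponentMk_eq_of_adj hab
  · obtain ⟨⟨rfl, rfl⟩ | ⟨rfl, rfl⟩, -⟩ := (edge_adj _ _ _ _).1 hab
    exacts [ConnectedComponent.sound h, (ConnectedComponent.sound h).symm]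

theorem card_connectedComponent_sup_edge_add_one [Finite V] (h : ¬G.Reachable x y) :
    Nat.card (G ⊔ edge x y).ConnectedComponent + 1 = Nat.card G.ConnectedComponent := by
  classical
  set cy := G.connectedComponentMk y
  have hx : G.connectedComponentMk x ≠ cy := fun hxy => h (ConnectedComponent.exact hxy)
  -- `r` merges the component of `y` into that of `x`; it is constant on the components of
  -- `G ⊔ edge x y`, which it therefore identifies with the components of `G` other than `cy`.
  let r : V → G.ConnectedComponent := fun v =>
    if G.connectedComponentMk v = cy then G.connectedComponentMk x else G.connectedComponentMk v
  have hr : ∀ v w, (G ⊔ edge x y).Reachable v w → r v = r w := fun v w hvw => by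
    refine hvw.eq_of_forall_adj fun a b hab => ?_
    rcases hab with hab | hab
    · simp only [r, ConnectedComponent.connectedComponentMk_eq_of_adj hab]
    · obtain ⟨⟨rfl, rfl⟩ | ⟨rfl, rfl⟩, -⟩ := (edge_adj _ _ _ _).1 hab <;> simp [r, cy]
  let ψ : {c // c ≠ cy} → (G ⊔ edge x y).ConnectedComponent := fun c =>
    c.1.map (Hom.ofLE le_sup_left)
  have hψ : Function.Bijective ψ := by
    constructor
    · rintro ⟨c, hc⟩ ⟨c', hc'⟩ hcc
      induction c using ConnectedComponent.ind with | h v => ?_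
      induction c' using ConnectedComponent.ind with | h w => ?_
      have : r v = r w := hr v w (ConnectedComponent.exact hcc)
      simp only [r, if_neg hc, if_neg hc'] at this
      exact Subtype.ext this
    · refine ConnectedComponent.ind fun v => ?_
      by_cases hv : G.connectedComponentMk v = cy
      · refine ⟨⟨_, hx⟩, ConnectedComponent.sound ?_⟩
        exact (G.reachable_sup_edge x y).trans
          ((ConnectedComponent.exact hv).symm.mono le_sup_left)
      · exact ⟨⟨_, hv⟩, rfl⟩
  have hcard : Nat.card {c // c ≠ cy} + 1 = Nat.card G.ConnectedComponent := by
    rw [← Set.ncard_univ G.ConnectedComponent,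
      ← Set.ncard_sdiff_singleton_add_one (Set.mem_univ cy), ← Nat.card_coe_set_eq]
    congr 1
    exact Nat.card_congr (Equiv.subtypeEquivRight fun c => by simp)
  rw [← hcard, Nat.card_eq_of_bijective ψ hψ]

end SimpleGraph

theorem subGraph_insert [DecidableEq E] (ends : E → V × V) (e : E) (A : Finset E) :
    subGraph ends (insert e A) = subGraph ends A ⊔ SimpleGraph.edge (ends e).1 (ends e).2 := by
  ext a b
  simp only [subGraph, SimpleGraph.sup_adj, SimpleGraph.fromRel_adj, SimpleGraph.edge_adj,
    Finset.mem_insert, Prod.ext_iff]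
  grind

section RandomCluster

open scoped Classical

variable (ends : E → V × V) {e : E} {A : Finset E} {p q : ℝ}

theorem rcWeight_pos [Fintype E] (hp0 : 0 < p) (hp1 : p < 1) (hq : 0 < q) (A : Finset E) :
    0 < rcWeight ends p q A :=
  mul_pos (pow_pos (div_pos hp0 (sub_pos.2 hp1)) _) (pow_pos hq _)

theorem rcMu_pos [Fintype E] (hp0 : 0 < p) (hp1 : p < 1) (hq : 0 < q) (A : Finset E) :
    0 < rcMu ends p q A :=
  div_pos (rcWeight_pos ends hp0 hp1 hq A)
    (Finset.sum_pos (fun B _ => rcWeight_pos ends hp0 hp1 hq B) Finset.univ_nonempty)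

variable [DecidableEq E]

theorem connectedIn_insert_self (e : E) (A : Finset E) : connectedIn ends (insert e A) e := by
  rw [connectedIn, subGraph_insert]
  exact SimpleGraph.reachable_sup_edge _ _ _

theorem compCount_insert_of_connectedIn (h : connectedIn ends A e) :
    compCount ends (insert e A) = compCount ends A := by
  rw [compCount, compCount, subGraph_insert]
  exact SimpleGraph.card_connectedComponent_sup_edge_of_reachable h

theorem compCount_insert_add_one [Finite V] (h : ¬connectedIn ends A e) :
    compCount ends (insert e A) + 1 = compCount ends A := by
  rw [compCount, compCount, subGraph_insert]
  exact SimpleGraph.card_connectedComponent_sup_edge_add_one h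

variable [Fintype E]

theorem rcWeight_insert_mul [Finite V] (hp1 : p < 1) (hq : q ≠ 0) (he : e ∉ A) :
    rcWeight ends p q (insert e A) * (1 - p) =
      rcWeight ends p q A * (if connectedIn ends A e then p else p / q) := by
  have hp : p / (1 - p) * (1 - p) = p := div_mul_cancel₀ p (sub_pos.2 hp1).ne'
  rw [rcWeight, rcWeight, Finset.card_insert_of_notMem he, pow_succ]
  split_ifs with hc
  · rw [compCount_insert_of_connectedIn ends hc]
    linear_combination (p / (1 - p)) ^ A.card * q ^ compCount ends A * hp
  · rw [← compCount_insert_add_one ends hc, pow_succ q]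
    linear_combination (p / (1 - p)) ^ A.card * q ^ compCount ends (insert e A) *
      (hp - div_mul_cancel₀ p hq)

theorem rcMu_insert_mul [Finite V] (hp1 : p < 1) (hq : q ≠ 0) (he : e ∉ A) :
    rcMu ends p q (insert e A) * (1 - p) =
      rcMu ends p q A * (if connectedIn ends A e then p else p / q) := by
  rw [rcMu, rcMu, div_mul_eq_mul_div, div_mul_eq_mul_div, rcWeight_insert_mul ends hp1 hq he]

end RandomCluster

/-- With `a = μ A`, `b = μ (A ∪ {e})` and `r` the single-bond rate of adding `e`, `a * r` and
`a * (b / (b + a))` are the single-bond and heat-bath conductances between `A` and `A ∪ {e}`. -/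
theorem pair_conductance_bounds {a b p q r : ℝ} (ha : 0 < a) (hb : 0 < b)
    (hbal : b * (1 - p) = a * r) (hr : p / q ≤ r) (hrp : r ≤ p) :
    (1 - p * (1 - 1 / q)) * (a * (b / (b + a))) ≤ a * r ∧ a * r ≤ a * (b / (b + a)) := by
  have hab : 0 < b + a := add_pos hb ha
  rw [mul_div_assoc', mul_div_assoc', div_le_iff₀ hab, le_div_iff₀ hab]
  constructor
  · have : a * r * (b + a) - (1 - p * (1 - 1 / q)) * (a * b) = a * b * (r - p / q) := by
      linear_combination (-a) * hbal
    nlinarith [mul_nonneg (mul_pos ha hb).le (sub_nonneg.2 hr)]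
  · have : a * b - a * r * (b + a) = a * b * (p - r) := by linear_combination a * hbal
    nlinarith [mul_nonneg (mul_pos ha hb).le (sub_nonneg.2 hrp)]

section EdgeKernels

open scoped Classical

variable [DecidableEq E] (ends : E → V × V) (p q : ℝ)

def sbEdgeKernel (e : E) (A B : Finset E) : ℝ :=
  if connectedIn ends A e then
    (if B = insert e A then p else 0) + (if B = A.erase e then 1 - p else 0)
  else
    (if B = insert e A then p / q else 0) + (if B = A.erase e then 1 - p / q else 0)

theorem PSBRC_eq_avgKernel [Fintype E] : PSBRC ends p q = avgKernel (sbEdgeKernel ends p q) := rfl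

variable {ends p q} {e : E} {A B : Finset E}

theorem sbEdgeKernel_of_erase_ne (h : B.erase e ≠ A.erase e) : sbEdgeKernel ends p q e A B = 0 := by
  rw [Ne, Finset.erase_eq_erase_iff, not_or] at h
  simp [sbEdgeKernel, h.1, h.2]

theorem sbEdgeKernel_insert :
    sbEdgeKernel ends p q e A (insert e A) = if connectedIn ends A e then p else p / q := by
  have := Finset.insert_ne_erase e A
  split_ifs with hc <;> simp [sbEdgeKernel, hc, this]

theorem sbEdgeKernel_insert_self (he : e ∉ A) :
    sbEdgeKernel ends p q e (insert e A) A = 1 - p := by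
  have hA : A ≠ insert e A := fun h => he (h ▸ Finset.mem_insert_self e A)
  simp [sbEdgeKernel, connectedIn_insert_self, hA, Finset.erase_insert he]

theorem sbEdgeKernel_nonneg (hp0 : 0 < p) (hp1 : p < 1) (hq : 1 ≤ q) (e : E) (A B : Finset E) :
    0 ≤ sbEdgeKernel ends p q e A B := by
  have h₁ : 0 ≤ p / q := div_nonneg hp0.le (zero_le_one.trans hq)
  have h₂ : p / q ≤ p := div_le_self hp0.le hq
  unfold sbEdgeKernel
  split_ifs <;> linarith

theorem sbEdgeKernel_pos_insert (hp0 : 0 < p) (hq : 0 < q) (e : E) (A : Finset E) :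
    0 < sbEdgeKernel ends p q e A (insert e A) := by
  rw [sbEdgeKernel_insert]
  split_ifs <;> positivity

theorem sbEdgeKernel_pos_erase (hp0 : 0 < p) (hp1 : p < 1) (hq : 1 ≤ q) (e : E) (A : Finset E) :
    0 < sbEdgeKernel ends p q e A (A.erase e) := by
  have h₂ : p / q ≤ p := div_le_self hp0.le hq
  simp only [sbEdgeKernel, if_neg (Finset.insert_ne_erase e A).symm, if_true]
  split_ifs <;> linarith

variable [Fintype E] (ends p q)

def hbEdgeKernel (e : E) (A B : Finset E) : ℝ :=
  (rcMu ends p q B / (rcMu ends p q (insert e A) + rcMu ends p q (A.erase e))) *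
    (if B.erase e = A.erase e then 1 else 0)

theorem PHBRC_eq_avgKernel : PHBRC ends p q = avgKernel (hbEdgeKernel ends p q) := rfl

variable {ends p q}

theorem hbEdgeKernel_of_erase_ne (h : B.erase e ≠ A.erase e) : hbEdgeKernel ends p q e A B = 0 := by
  simp [hbEdgeKernel, h]

theorem hbEdgeKernel_insert (he : e ∉ A) :
    hbEdgeKernel ends p q e A (insert e A) =
      rcMu ends p q (insert e A) / (rcMu ends p q (insert e A) + rcMu ends p q A) := by
  simp [hbEdgeKernel, Finset.erase_eq_of_notMem he, Finset.erase_insert he]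

theorem sum_hbEdgeKernel_mul (f : Finset E → ℝ) :
    ∑ B, hbEdgeKernel ends p q e A B * f B =
      (rcMu ends p q (insert e A) * f (insert e A) + rcMu ends p q (A.erase e) * f (A.erase e)) /
        (rcMu ends p q (insert e A) + rcMu ends p q (A.erase e)) := by
  have hfilter : Finset.univ.filter (fun B : Finset E => B.erase e = A.erase e) =
      {insert e A, A.erase e} := by
    ext B
    simp [Finset.erase_eq_erase_iff]
  calc ∑ B, hbEdgeKernel ends p q e A B * f B
      = ∑ B ∈ Finset.univ.filter (fun B : Finset E => B.erase e = A.erase e),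
          rcMu ends p q B * f B / (rcMu ends p q (insert e A) + rcMu ends p q (A.erase e)) := by
        rw [Finset.sum_filter]
        refine Finset.sum_congr rfl fun B _ => ?_
        split_ifs <;> simp [hbEdgeKernel, *, mul_div_right_comm]
    _ = _ := by rw [hfilter, Finset.sum_pair (Finset.insert_ne_erase e A), add_div]

theorem hbEdgeKernel_nonneg (hp0 : 0 < p) (hp1 : p < 1) (hq : 0 < q) (e : E) (A B : Finset E) :
    0 ≤ hbEdgeKernel ends p q e A B :=
  mul_nonneg (div_nonneg (rcMu_pos ends hp0 hp1 hq B).le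
    (add_pos (rcMu_pos ends hp0 hp1 hq _) (rcMu_pos ends hp0 hp1 hq _)).le) (by positivity)

theorem sum_hbEdgeKernel (hp0 : 0 < p) (hp1 : p < 1) (hq : 0 < q) (e : E) (A : Finset E) :
    ∑ B, hbEdgeKernel ends p q e A B = 1 := by
  simpa [div_self (add_pos (rcMu_pos ends hp0 hp1 hq _) (rcMu_pos ends hp0 hp1 hq _)).ne'] using
    sum_hbEdgeKernel_mul (e := e) (A := A) (ends := ends) (p := p) (q := q) fun _ => 1

theorem hbEdgeKernel_idempotent (hp0 : 0 < p) (hp1 : p < 1) (hq : 0 < q) (e : E)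
    (f : Finset E → ℝ) (A : Finset E) :
    ∑ B, hbEdgeKernel ends p q e A B * ∑ C, hbEdgeKernel ends p q e B C * f C =
      ∑ B, hbEdgeKernel ends p q e A B * f B := by
  have hZ := (add_pos (rcMu_pos ends hp0 hp1 hq (insert e A))
    (rcMu_pos ends hp0 hp1 hq (A.erase e))).ne'
  have hins : insert e (A.erase e) = insert e A := by ext; simp; tauto
  simp only [sum_hbEdgeKernel_mul, Finset.insert_idem, Finset.erase_insert_eq_erase, hins,
    Finset.erase_idem]
  rw [← add_mul, mul_div_cancel_left₀ _ hZ]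

theorem hbEdgeKernel_reversible (e : E) (A B : Finset E) :
    rcMu ends p q A * hbEdgeKernel ends p q e A B =
      rcMu ends p q B * hbEdgeKernel ends p q e B A := by
  induction A, B using forall_of_flip e with
  | symm A B h => exact h.symm
  | refl A => rfl
  | far A B h =>
    rw [hbEdgeKernel_of_erase_ne h, hbEdgeKernel_of_erase_ne (Ne.symm h), mul_zero, mul_zero]
  | flip A he =>
    rw [hbEdgeKernel_insert he]
    simp [hbEdgeKernel, Finset.erase_insert he, Finset.erase_eq_of_notMem he]
    ring

theorem hbEdgeKernel_pos_insert (hp0 : 0 < p) (hp1 : p < 1) (hq : 0 < q) (e : E) (A : Finset E) :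
    0 < hbEdgeKernel ends p q e A (insert e A) := by
  rw [hbEdgeKernel, if_pos (Finset.erase_insert_eq_erase A e), mul_one]
  exact div_pos (rcMu_pos ends hp0 hp1 hq _)
    (add_pos (rcMu_pos ends hp0 hp1 hq _) (rcMu_pos ends hp0 hp1 hq _))

theorem hbEdgeKernel_pos_erase (hp0 : 0 < p) (hp1 : p < 1) (hq : 0 < q) (e : E) (A : Finset E) :
    0 < hbEdgeKernel ends p q e A (A.erase e) := by
  rw [hbEdgeKernel, if_pos Finset.erase_idem, mul_one]
  exact div_pos (rcMu_pos ends hp0 hp1 hq _)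
    (add_pos (rcMu_pos ends hp0 hp1 hq _) (rcMu_pos ends hp0 hp1 hq _))

theorem sum_sbEdgeKernel (e : E) (A : Finset E) : ∑ B, sbEdgeKernel ends p q e A B = 1 := by
  unfold sbEdgeKernel
  split_ifs <;> simp [Finset.sum_add_distrib]

theorem sbEdgeKernel_reversible [Finite V] (hp1 : p < 1) (hq : q ≠ 0) (e : E) (A B : Finset E) :
    rcMu ends p q A * sbEdgeKernel ends p q e A B =
      rcMu ends p q B * sbEdgeKernel ends p q e B A := by
  induction A, B using forall_of_flip e with
  | symm A B h => exact h.symm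
  | refl A => rfl
  | far A B h =>
    rw [sbEdgeKernel_of_erase_ne h, sbEdgeKernel_of_erase_ne (Ne.symm h), mul_zero, mul_zero]
  | flip A he =>
    rw [sbEdgeKernel_insert, sbEdgeKernel_insert_self he, rcMu_insert_mul ends hp1 hq he]

theorem edgeKernel_conductance_bounds [Finite V] (hp0 : 0 < p) (hp1 : p < 1) (hq : 1 ≤ q)
    (e : E) {A B : Finset E} (hAB : A ≠ B) :
    (1 - p * (1 - 1 / q)) * (rcMu ends p q A * hbEdgeKernel ends p q e A B) ≤
        rcMu ends p q A * sbEdgeKernel ends p q e A B ∧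
      rcMu ends p q A * sbEdgeKernel ends p q e A B ≤
        rcMu ends p q A * hbEdgeKernel ends p q e A B := by
  have hq0 : 0 < q := zero_lt_one.trans_le hq
  revert hAB
  induction A, B using forall_of_flip e with
  | symm A B h =>
    rw [hbEdgeKernel_reversible, sbEdgeKernel_reversible hp1 hq0.ne']
    exact fun hBA => h hBA.symm
  | refl A => exact fun h => absurd rfl h
  | far A B h => simp [hbEdgeKernel_of_erase_ne h, sbEdgeKernel_of_erase_ne h]
  | flip A he =>
    intro _
    rw [hbEdgeKernel_insert he, sbEdgeKernel_insert]
    refine pair_conductance_bounds (rcMu_pos ends hp0 hp1 hq0 _) (rcMu_pos ends hp0 hp1 hq0 _)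
      (rcMu_insert_mul ends hp1 hq0.ne' he) ?_ ?_ <;> split_ifs
    exacts [div_le_self hp0.le hq, le_rfl, le_rfl, div_le_self hp0.le hq]

end EdgeKernels

section Dynamics

variable [DecidableEq E] [Fintype E] (ends : E → V × V) {p q : ℝ}

theorem isReversiblePSD_PHBRC [Nonempty E] (hp0 : 0 < p) (hp1 : p < 1) (hq : 0 < q) :
    IsReversiblePSD (rcMu ends p q) (PHBRC ends p q) := by
  rw [PHBRC_eq_avgKernel]
  have hnn := hbEdgeKernel_nonneg (ends := ends) hp0 hp1 hq
  have hrow := avgKernel_row_sum (sum_hbEdgeKernel (ends := ends) hp0 hp1 hq)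
  refine ⟨hrow, avgKernel_reversible hbEdgeKernel_reversible,
    harmonic_const_of_flips (avgKernel_nonneg hnn) hrow
      (fun A e => avgKernel_pos hnn e (hbEdgeKernel_pos_insert hp0 hp1 hq e A))
      (fun A e => avgKernel_pos hnn e (hbEdgeKernel_pos_erase hp0 hp1 hq e A)), fun f => ?_⟩
  rw [kernelForm_avgKernel]
  exact mul_nonneg (by positivity) (Finset.sum_nonneg fun e _ =>
    kernelForm_nonneg_of_idempotent (fun A => (rcMu_pos ends hp0 hp1 hq A).le)
      (hbEdgeKernel_reversible e) (hbEdgeKernel_idempotent hp0 hp1 hq e) f)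

variable [Finite V]

theorem mul_dirichletForm_PHBRC_le (hp0 : 0 < p) (hp1 : p < 1) (hq : 1 ≤ q) (f : Finset E → ℝ) :
    (1 - p * (1 - 1 / q)) * dirichletForm (rcMu ends p q) (PHBRC ends p q) f ≤
      dirichletForm (rcMu ends p q) (PSBRC ends p q) f := by
  rw [PHBRC_eq_avgKernel, PSBRC_eq_avgKernel]
  exact mul_dirichletForm_le_of_forall_ne (fun A B hAB => mul_avgKernel_le fun e =>
    (edgeKernel_conductance_bounds hp0 hp1 hq e hAB).1) f

theorem dirichletForm_PSBRC_le (hp0 : 0 < p) (hp1 : p < 1) (hq : 1 ≤ q) (f : Finset E → ℝ) :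
    dirichletForm (rcMu ends p q) (PSBRC ends p q) f ≤
      dirichletForm (rcMu ends p q) (PHBRC ends p q) f := by
  rw [PHBRC_eq_avgKernel, PSBRC_eq_avgKernel]
  simpa using mul_dirichletForm_le_of_forall_ne (c := 1) (fun A B hAB => mul_avgKernel_le fun e =>
    (one_mul _).trans_le (edgeKernel_conductance_bounds hp0 hp1 hq e hAB).2) f

theorem isReversiblePSD_PSBRC [Nonempty E] (hp0 : 0 < p) (hp1 : p < 1) (hq : 1 ≤ q) :
    IsReversiblePSD (rcMu ends p q) (PSBRC ends p q) := by
  have hq0 : 0 < q := zero_lt_one.trans_le hq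
  have hHB := isReversiblePSD_PHBRC ends hp0 hp1 hq0
  have hnn := sbEdgeKernel_nonneg (ends := ends) hp0 hp1 hq
  have hrow : ∀ A, ∑ B, PSBRC ends p q A B = 1 := avgKernel_row_sum sum_sbEdgeKernel
  have hrev : ∀ A B, rcMu ends p q A * PSBRC ends p q A B = rcMu ends p q B * PSBRC ends p q B A :=
    avgKernel_reversible (sbEdgeKernel_reversible hp1 hq0.ne')
  refine ⟨hrow, hrev, harmonic_const_of_flips (avgKernel_nonneg hnn) hrow
      (fun A e => avgKernel_pos hnn e (sbEdgeKernel_pos_insert hp0 hq0 e A))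
      (fun A e => avgKernel_pos hnn e (sbEdgeKernel_pos_erase hp0 hp1 hq e A)), fun f => ?_⟩
  have hHBf := hHB.form_nonneg f
  rw [kernelForm_eq_sub_dirichletForm hHB.row_sum hHB.reversible] at hHBf
  rw [kernelForm_eq_sub_dirichletForm hrow hrev]
  linarith [dirichletForm_PSBRC_le ends hp0 hp1 hq f]

end Dynamics

theorem sb_hb_rc_gap_comparison_general
    {V E : Type*} [Fintype V] [Fintype E] [DecidableEq E]
    (ends : E → V × V) (p : ℝ) (hp : p ∈ Set.Ioo (0 : ℝ) 1) (q : ℝ) (hq : 1 ≤ q) :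
    (1 - p * (1 - 1 / q)) * spectralGap (PHBRC ends p q) ≤ spectralGap (PSBRC ends p q) ∧
      spectralGap (PSBRC ends p q) ≤ spectralGap (PHBRC ends p q) := by
  obtain ⟨hp0, hp1⟩ := hp
  have hq0 : 0 < q := zero_lt_one.trans_le hq
  have hinv : 0 ≤ 1 - 1 / q ∧ 1 - 1 / q ≤ 1 :=
    ⟨sub_nonneg.2 ((div_le_one hq0).2 hq), sub_le_self _ (by positivity)⟩
  have hγ0 : 0 ≤ 1 - p * (1 - 1 / q) := by nlinarith
  have hγ1 : 1 - p * (1 - 1 / q) ≤ 1 := by nlinarith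
  rcases isEmpty_or_nonempty E with hE | hE
  · rw [PHBRC_eq_avgKernel, PSBRC_eq_avgKernel, avgKernel_of_isEmpty, avgKernel_of_isEmpty,
      spectralGap_zero, mul_one]
    exact ⟨hγ1, le_rfl⟩
  have hμ := rcMu_pos ends hp0 hp1 hq0
  have hHB := isReversiblePSD_PHBRC ends hp0 hp1 hq0
  have hSB := isReversiblePSD_PSBRC ends hp0 hp1 hq
  refine ⟨mul_spectralGap_le_of_dirichletForm_le hμ hHB hSB hγ0 hγ1
    (mul_dirichletForm_PHBRC_le ends hp0 hp1 hq), ?_⟩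
  simpa using mul_spectralGap_le_of_dirichletForm_le hμ hSB hHB zero_le_one le_rfl
    fun f => (one_mul _).trans_le (dirichletForm_PSBRC_le ends hp0 hp1 hq f)

/-- Comparison of heat-bath and single-bond dynamics for the
random-cluster model: `(1 − p(1 − 1/q))·λ(P̃_HB) ≤ λ(P̃_SB) ≤ λ(P̃_HB)`. -/
theorem sb_hb_rc_gap_comparison
    {V E : Type*} [Fintype V] [DecidableEq V] [Fintype E] [DecidableEq E]
    (ends : E → V × V) (p : ℝ) (hp : p ∈ Set.Ioo (0 : ℝ) 1) (q : ℝ) (hq : 1 ≤ q) :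
    (1 - p * (1 - 1 / q)) * spectralGap (PHBRC ends p q) ≤ spectralGap (PSBRC ends p q) ∧
      spectralGap (PSBRC ends p q) ≤ spectralGap (PHBRC ends p q) :=
  sb_hb_rc_gap_comparison_general ends p hp q hq
end
end

section
/- Let G = (V,E) be a finite graph, q ≥ 1 an integer, β > 0 and p := 1 − e^{−β}. The matrices T_e, e ∈ E, pairwise commute, and the following matrix identities hold: P̃_SW = M · (∏_{e∈E} T_e) · M*, where the product over e ∈ E is taken in any fixed order, and P̃_SB = |E|⁻¹ Σ_{e∈E} M · T_e · M*. -/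
open Finset

noncomputable section

variable {V E : Type*}

/-- The matrix `M` mapping the random-cluster model to the joint
(Edwards–Sokal) model: `M(B,(σ,A)) = q^{−c(B)} 𝟙(A = B) 𝟙(B ⊆ E(σ))`. -/
def Mmat {V E : Type*} [Fintype V] [Fintype E] [DecidableEq E]
    (ends : E → V × V) (q : ℕ) :
    Matrix (Finset E) ((V → Fin q) × Finset E) ℝ :=
  Matrix.of fun B x =>
    ((q : ℝ) ^ compCount ends B)⁻¹ *
      ((if x.2 = B then 1 else 0) * (if B ⊆ agreeSet ends x.1 then 1 else 0))

/-- The adjoint matrix `M*`: `M*((σ,A),B) = 𝟙(A = B)`. -/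
def Mstar (V E : Type*) [DecidableEq E] (q : ℕ) :
    Matrix ((V → Fin q) × Finset E) (Finset E) ℝ :=
  Matrix.of fun x B => if x.2 = B then 1 else 0

/-- The single-edge update matrix `T_e` on the joint (Edwards–Sokal) model. -/
def Tmat {V E : Type*} [Fintype V] [DecidableEq E] (ends : E → V × V) (q : ℕ) (p : ℝ) (e : E) :
    Matrix ((V → Fin q) × Finset E) ((V → Fin q) × Finset E) ℝ :=
  Matrix.of fun x y =>
    (if y.1 = x.1 then 1 else 0) *
      (if x.1 (ends e).1 = x.1 (ends e).2 then
        (if y.2 = insert e x.2 then p else 0) + (if y.2 = x.2.erase e then 1 - p else 0)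
      else (if y.2 = x.2.erase e then 1 else 0))

/-!
Every `T_e` keeps the coloring fixed, so on the joint space it is block diagonal: the block of a
coloring `σ` is the kernel on edge sets that resamples `e`, open with probability `p` if `σ`
agrees on `e` and `0` otherwise. Resamplings of distinct edges act on different coordinates, so
these kernels commute, and resampling every edge once makes all edges independently open with their
probabilities; averaging this against `M`, i.e. over the colorings compatible with `A`, is the
Swendsen–Wang kernel. A single resampling kernel is affine in its opening probability, so the
average over compatible colorings is again a resampling kernel, with probability `p` if the
endpoints of `e` are connected in `(V, A)` and `p/q` otherwise: a uniform coloring of the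
components gives two distinct components the same color with probability `1/q`.
-/

def Equiv.subtypeApplyEqApplyProd {C α : Type*} [DecidableEq C] {c₁ c₂ : C}
    (h : c₁ ≠ c₂) :
    {g : C → α // g c₁ = g c₂} × α ≃ (C → α) where
  toFun x := Function.update x.1.1 c₂ x.2
  invFun f := (⟨Function.update f c₂ (f c₁), by simp [h]⟩, f c₂)
  left_inv := by
    rintro ⟨⟨g, hg⟩, a⟩
    simp [h, ← hg]
  right_inv f := by simp

theorem Nat.card_subtype_apply_eq_apply_mul {C α : Type*} [Finite C] {c₁ c₂ : C}
    (h : c₁ ≠ c₂) :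
    Nat.card {g : C → α // g c₁ = g c₂} * Nat.card α = Nat.card α ^ Nat.card C := by
  classical
  rw [← Nat.card_prod, Nat.card_congr (Equiv.subtypeApplyEqApplyProd h), Nat.card_fun]

theorem Finset.sdiff_eq_insert_sdiff_iff {E : Type*} [DecidableEq E] {L A B : Finset E} {e : E}
    (he : e ∉ L) :
    B \ L = insert e A \ L ↔ B \ insert e L = A \ insert e L ∧ e ∈ B := by
  simp only [Finset.ext_iff, mem_sdiff, mem_insert]
  constructor
  · intro h
    exact ⟨fun x => by by_cases hx : x = e <;> simp_all, by simpa [he] using h e⟩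
  · rintro ⟨h, heB⟩ x
    by_cases hx : x = e <;> simp_all

theorem Finset.sdiff_eq_erase_sdiff_iff {E : Type*} [DecidableEq E] {L A B : Finset E} {e : E}
    (he : e ∉ L) :
    B \ L = A.erase e \ L ↔ B \ insert e L = A \ insert e L ∧ e ∉ B := by
  simp only [Finset.ext_iff, mem_sdiff, mem_insert, mem_erase]
  constructor
  · intro h
    exact ⟨fun x => by by_cases hx : x = e <;> simp_all, by simpa [he] using h e⟩
  · rintro ⟨h, heB⟩ x
    by_cases hx : x = e <;> simp_all

section Colorings

theorem subGraph_reachable_of_mem {V E : Type*} {ends : E → V × V} {A : Finset E} {e : E}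
    (he : e ∈ A) : (subGraph ends A).Reachable (ends e).1 (ends e).2 := by
  by_cases hv : (ends e).1 = (ends e).2
  · rw [hv]
  · exact SimpleGraph.Adj.reachable
      ((SimpleGraph.fromRel_adj _ _ _).2 ⟨hv, Or.inl ⟨e, he, Or.inl rfl⟩⟩)

variable {V E : Type*} [Fintype E] {ends : E → V × V} {A : Finset E} {q : ℕ} {σ : V → Fin q}

theorem subset_agreeSet_iff :
    A ⊆ agreeSet ends σ ↔ ∀ a b, (subGraph ends A).Reachable a b → σ a = σ b := by
  refine ⟨fun h a b hab => ?_, fun h e he => ?_⟩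
  · have hadj {u v : V} (huv : (subGraph ends A).Adj u v) : σ u = σ v := by
      obtain ⟨-, ⟨e, he, huv | huv⟩ | ⟨e, he, huv | huv⟩⟩ :=
        (SimpleGraph.fromRel_adj _ _ _).1 huv <;>
      · have := h he
        simp_all [agreeSet]
    obtain ⟨w⟩ := hab
    induction w with
    | nil => rfl
    | cons huv _ ih => exact (hadj huv).trans ih
  · simpa [agreeSet] using h _ _ (subGraph_reachable_of_mem he)

variable (ends A q) in
def agreeColoringEquiv :
    {σ : V → Fin q // A ⊆ agreeSet ends σ} ≃
      ((subGraph ends A).ConnectedComponent → Fin q) where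
  toFun σ := Quot.lift σ.1 (subset_agreeSet_iff.1 σ.2)
  invFun g := ⟨fun v => g ((subGraph ends A).connectedComponentMk v), fun _ he => by
    simpa [agreeSet] using congrArg g (SimpleGraph.ConnectedComponent.sound
      (subGraph_reachable_of_mem he))⟩
  left_inv _ := rfl
  right_inv g := by
    funext c
    induction c using SimpleGraph.ConnectedComponent.ind
    rfl

variable [Fintype V] [DecidableEq V] [DecidableEq E]

theorem card_subset_agreeSet :
    #{σ : V → Fin q | A ⊆ agreeSet ends σ} = q ^ compCount ends A := by
  rw [← Fintype.card_subtype, ← Nat.card_eq_fintype_card,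
    Nat.card_congr (agreeColoringEquiv ends A q), Nat.card_fun, Nat.card_eq_fintype_card,
    Fintype.card_fin, compCount]

theorem card_subset_agreeSet_agree_of_connectedIn {e : E} (h : connectedIn ends A e) :
    #{σ : V → Fin q | A ⊆ agreeSet ends σ ∧ σ (ends e).1 = σ (ends e).2} =
      q ^ compCount ends A := by
  rw [← card_subset_agreeSet]
  congr 1
  exact filter_congr fun σ _ => and_iff_left_of_imp fun hσ => subset_agreeSet_iff.1 hσ _ _ h

theorem card_subset_agreeSet_agree_of_not_connectedIn {e : E} (h : ¬ connectedIn ends A e) :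
    #{σ : V → Fin q | A ⊆ agreeSet ends σ ∧ σ (ends e).1 = σ (ends e).2} * q =
      q ^ compCount ends A := by
  let mk := (subGraph ends A).connectedComponentMk
  have hne : mk (ends e).1 ≠ mk (ends e).2 := fun hc =>
    h (SimpleGraph.ConnectedComponent.exact hc)
  have hequiv : {σ : V → Fin q // A ⊆ agreeSet ends σ ∧ σ (ends e).1 = σ (ends e).2} ≃
      {g : (subGraph ends A).ConnectedComponent → Fin q //
        g (mk (ends e).1) = g (mk (ends e).2)} :=
    (Equiv.subtypeSubtypeEquivSubtypeInter _ _).symm.trans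
      ((agreeColoringEquiv ends A q).subtypeEquiv fun _ => Iff.rfl)
  have := Nat.card_subtype_apply_eq_apply_mul (α := Fin q) hne
  rwa [← Nat.card_congr hequiv, Nat.card_eq_fintype_card, Fintype.card_subtype, Nat.card_fin,
    ← compCount] at this

end Colorings

section Resample

variable {E : Type*} [Fintype E] [DecidableEq E]

def resample (r : E → ℝ) (e : E) : Matrix (Finset E) (Finset E) ℝ :=
  Matrix.of fun A B =>
    (if B = insert e A then r e else 0) + (if B = A.erase e then 1 - r e else 0)

theorem resample_mul_apply (r : E → ℝ) (e : E) (K : Matrix (Finset E) (Finset E) ℝ)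
    (A B : Finset E) :
    (resample r e * K) A B = r e * K (insert e A) B + (1 - r e) * K (A.erase e) B := by
  simp [resample, Matrix.mul_apply, add_mul, sum_add_distrib]

theorem list_prod_map_resample_apply (r : E → ℝ) {l : List E} (hl : l.Nodup)
    (A B : Finset E) :
    (l.map (resample r)).prod A B =
      if B \ l.toFinset = A \ l.toFinset then
        ∏ e ∈ l.toFinset, (if e ∈ B then r e else 1 - r e) else 0 := by
  induction l generalizing A with
  | nil => simp [Matrix.one_apply, eq_comm]
  | cons e l ih =>
    obtain ⟨hel, hl⟩ := List.nodup_cons.1 hl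
    have he : e ∉ l.toFinset := List.mem_toFinset.not.2 hel
    rw [List.map_cons, List.prod_cons, resample_mul_apply, ih hl, ih hl, List.toFinset_cons,
      prod_insert he]
    simp only [Finset.sdiff_eq_insert_sdiff_iff he, Finset.sdiff_eq_erase_sdiff_iff he]
    by_cases heB : e ∈ B <;> split_ifs <;> simp_all

theorem resample_mul_resample_comm (r : E → ℝ) (e e' : E) :
    resample r e * resample r e' = resample r e' * resample r e := by
  rcases eq_or_ne e e' with rfl | h
  · rfl
  ext A B
  have hl : [e, e'].Nodup := by simp [h]
  have hl' : [e', e].Nodup := by simp [h.symm]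
  have hL : [e, e'].toFinset = [e', e].toFinset := by ext; simp [or_comm]
  calc (resample r e * resample r e') A B = ([e, e'].map (resample r)).prod A B := by simp
    _ = ([e', e].map (resample r)).prod A B := by
      rw [list_prod_map_resample_apply r hl, list_prod_map_resample_apply r hl', hL]
    _ = (resample r e' * resample r e) A B := by simp

end Resample

section JointModel

variable {V E : Type*} (ends : E → V × V) (q : ℕ)

def openProb (p : ℝ) (σ : V → Fin q) (e : E) : ℝ :=
  if σ (ends e).1 = σ (ends e).2 then p else 0

theorem prod_ite_mem_openProb [Fintype E] [DecidableEq E] (p : ℝ) (σ : V → Fin q)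
    (B : Finset E) :
    ∏ e, (if e ∈ B then openProb ends q p σ e else 1 - openProb ends q p σ e) =
      if B ⊆ agreeSet ends σ then p ^ #B * (1 - p) ^ #(agreeSet ends σ \ B) else 0 := by
  have hB : ∀ e ∈ B, openProb ends q p σ e = if e ∈ agreeSet ends σ then p else 0 := by
    simp [openProb, agreeSet]
  have hBc : ∀ e ∈ Bᶜ,
      1 - openProb ends q p σ e = if e ∈ agreeSet ends σ then 1 - p else 1 := by
    intro e _
    simp only [openProb, agreeSet, mem_filter, mem_univ, true_and]
    split_ifs <;> ring
  rw [prod_ite, filter_mem_eq_inter, univ_inter, filter_notMem_eq_sdiff, ← compl_eq_univ_sdiff,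
    prod_congr rfl hB, prod_congr rfl hBc, prod_ite_zero, ← prod_filter, prod_const, prod_const,
    filter_mem_eq_inter, inter_comm, ← sdiff_eq_inter_compl, ite_mul, zero_mul]
  rfl

variable [Fintype V] [DecidableEq V] [Fintype E] [DecidableEq E]

-- `Matrix.blockDiagonal` indexes the blocks by the second factor, hence the swap.
def colorBlocks :
    ((V → Fin q) → Matrix (Finset E) (Finset E) ℝ) →+*
      Matrix ((V → Fin q) × Finset E) ((V → Fin q) × Finset E) ℝ :=
  (Matrix.reindexAlgEquiv ℝ ℝ (Equiv.prodComm _ _)).toRingHom.comp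
    (Matrix.blockDiagonalRingHom _ _ ℝ)

theorem colorBlocks_apply (F : (V → Fin q) → Matrix (Finset E) (Finset E) ℝ)
    (x y : (V → Fin q) × Finset E) :
    colorBlocks q F x y = if y.1 = x.1 then F x.1 x.2 y.2 else 0 := by
  simp [colorBlocks, Matrix.blockDiagonal_apply, eq_comm]

theorem Tmat_eq_colorBlocks (p : ℝ) (e : E) :
    Tmat ends q p e = colorBlocks q fun σ => resample (openProb ends q p σ) e := by
  ext x y
  by_cases h : x.1 (ends e).1 = x.1 (ends e).2 <;> by_cases hσ : y.1 = x.1 <;>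
    simp [Tmat, colorBlocks_apply, resample, openProb, h, hσ]

theorem list_prod_map_Tmat (p : ℝ) (l : List E) :
    (l.map (Tmat ends q p)).prod =
      colorBlocks q fun σ => (l.map (resample (openProb ends q p σ))).prod := by
  have hT : Tmat ends q p = colorBlocks q ∘ fun e σ => resample (openProb ends q p σ) e :=
    funext (Tmat_eq_colorBlocks ends q p)
  rw [hT, ← List.map_map, ← map_list_prod]
  congr 1
  ext1 σ
  simp only [Pi.list_prod_apply, List.map_map]
  rfl

theorem Tmat_mul_Tmat_comm (p : ℝ) (e e' : E) :
    Tmat ends q p e * Tmat ends q p e' = Tmat ends q p e' * Tmat ends q p e := by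
  simp only [Tmat_eq_colorBlocks, ← map_mul]
  congr 1
  ext1 σ
  exact resample_mul_resample_comm _ e e'

theorem Mmat_mul_colorBlocks_mul_Mstar_apply
    (F : (V → Fin q) → Matrix (Finset E) (Finset E) ℝ) (A B : Finset E) :
    (Mmat ends q * colorBlocks q F * Mstar V E q) A B =
      ((q : ℝ) ^ compCount ends A)⁻¹ *
        ∑ σ : V → Fin q with A ⊆ agreeSet ends σ, F σ A B := by
  simp [Matrix.mul_apply, Mmat, Mstar, colorBlocks_apply, Fintype.sum_prod_type, sum_filter,
    mul_sum]

end JointModel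

section Dynamics

variable {V E : Type*} [Fintype V] [DecidableEq V] [Fintype E] [DecidableEq E]
  (ends : E → V × V) {q : ℕ} {p : ℝ}

theorem PSWRC_eq_Mmat_mul_list_prod_Tmat_mul_Mstar (hp : 1 - p ≠ 0) {l : List E} (hl : l.Nodup)
    (hlE : ∀ e, e ∈ l) :
    Matrix.of (PSWRC ends p q) = Mmat ends q * (l.map (Tmat ends q p)).prod * Mstar V E q := by
  have hL : l.toFinset = univ := eq_univ_of_forall fun e => List.mem_toFinset.2 (hlE e)
  have hE (s : Finset E) : s \ univ = ∅ := sdiff_eq_empty_iff_subset.2 (subset_univ s)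
  ext A B
  simp only [list_prod_map_Tmat, Mmat_mul_colorBlocks_mul_Mstar_apply,
    list_prod_map_resample_apply _ hl, hL, hE, if_true, prod_ite_mem_openProb]
  rw [Matrix.of_apply, PSWRC, mul_assoc, mul_sum, sum_filter]
  congr 1
  refine sum_congr rfl fun σ _ => ?_
  by_cases hA : A ⊆ agreeSet ends σ <;> by_cases hB : B ⊆ agreeSet ends σ <;>
    simp only [hA, hB, union_subset_iff, and_true, and_false, if_true, if_false, mul_zero]
  rw [card_sdiff_of_subset hB, pow_sub₀ _ hp (card_le_card hB), div_pow]
  field_simp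

open scoped Classical in
theorem average_openProb (hq : q ≠ 0) (A : Finset E) (e : E) :
    ((q : ℝ) ^ compCount ends A)⁻¹ *
        ∑ σ : V → Fin q with A ⊆ agreeSet ends σ, openProb ends q p σ e =
      if connectedIn ends A e then p else p / q := by
  have hqc : (q : ℝ) ^ compCount ends A ≠ 0 := pow_ne_zero _ (Nat.cast_ne_zero.2 hq)
  simp only [openProb, sum_ite, sum_const_zero, add_zero, sum_const, nsmul_eq_mul, filter_filter]
  split_ifs with h
  · rw [card_subset_agreeSet_agree_of_connectedIn h, Nat.cast_pow]
    field_simp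
  · have hcount := congrArg (Nat.cast : ℕ → ℝ)
      (card_subset_agreeSet_agree_of_not_connectedIn (q := q) h)
    push_cast at hcount
    have hcard := left_ne_zero_of_mul (hcount ▸ hqc)
    rw [← hcount]
    field_simp

open scoped Classical in
theorem Mmat_mul_Tmat_mul_Mstar_apply (hq : q ≠ 0) (e : E) (A B : Finset E) :
    (Mmat ends q * Tmat ends q p e * Mstar V E q) A B =
      resample (fun _ => if connectedIn ends A e then p else p / q) e A B := by
  have hqc : (q : ℝ) ^ compCount ends A ≠ 0 := pow_ne_zero _ (Nat.cast_ne_zero.2 hq)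
  rw [Tmat_eq_colorBlocks, Mmat_mul_colorBlocks_mul_Mstar_apply, ← average_openProb ends hq]
  simp only [resample, Matrix.of_apply, sum_add_distrib, sum_ite_irrel, sum_const_zero,
    sum_sub_distrib, sum_const, card_subset_agreeSet, nsmul_eq_mul, mul_one, Nat.cast_pow]
  split_ifs <;> field_simp <;> ring

theorem PSBRC_eq_smul_sum_Mmat_mul_Tmat_mul_Mstar (hq : q ≠ 0) :
    Matrix.of (PSBRC ends p q) =
      (Fintype.card E : ℝ)⁻¹ • ∑ e : E, Mmat ends q * Tmat ends q p e * Mstar V E q := by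
  ext A B
  simp only [Matrix.smul_apply, Matrix.sum_apply, Mmat_mul_Tmat_mul_Mstar_apply ends hq, PSBRC,
    Matrix.of_apply, resample, smul_eq_mul]
  congr 1
  refine sum_congr rfl fun e _ => ?_
  split_ifs <;> simp_all

end Dynamics

theorem sw_sb_joint_representation_general
    {V E : Type*} [Fintype V] [DecidableEq V] [Fintype E] [DecidableEq E]
    (ends : E → V × V) (q : ℕ) (hq : 1 ≤ q) (β : ℝ) :
    (∀ e e' : E,
      Tmat ends q (1 - Real.exp (-β)) e * Tmat ends q (1 - Real.exp (-β)) e' =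
        Tmat ends q (1 - Real.exp (-β)) e' * Tmat ends q (1 - Real.exp (-β)) e) ∧
    (∀ l : List E, l.Nodup → (∀ e : E, e ∈ l) →
      Matrix.of (PSWRC ends (1 - Real.exp (-β)) q) =
        Mmat ends q * (l.map (Tmat ends q (1 - Real.exp (-β)))).prod * Mstar V E q) ∧
    (Matrix.of (PSBRC ends (1 - Real.exp (-β)) q) =
      (Fintype.card E : ℝ)⁻¹ •
        ∑ e : E, Mmat ends q * Tmat ends q (1 - Real.exp (-β)) e * Mstar V E q) := by
  have hp : 1 - (1 - Real.exp (-β)) ≠ 0 := by simp [(Real.exp_pos _).ne']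
  exact ⟨Tmat_mul_Tmat_comm ends q _,
    fun _ hl hlE => PSWRC_eq_Mmat_mul_list_prod_Tmat_mul_Mstar ends hp hl hlE,
    PSBRC_eq_smul_sum_Mmat_mul_Tmat_mul_Mstar ends (by omega)⟩

/-- The matrices `T_e` pairwise commute, the Swendsen–Wang
dynamics for the random-cluster model factors as `M ⬝ (∏_e T_e) ⬝ M*` (the
product taken in any fixed order, i.e. along any enumeration of `E`), and the
single-bond dynamics factors as `|E|⁻¹ Σ_e M ⬝ T_e ⬝ M*`; here `p = 1 − e^{−β}`. -/
theorem sw_sb_joint_representation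
    {V E : Type*} [Fintype V] [DecidableEq V] [Fintype E] [DecidableEq E]
    (ends : E → V × V) (q : ℕ) (hq : 1 ≤ q) (β : ℝ) (hβ : 0 < β) :
    (∀ e e' : E,
      Tmat ends q (1 - Real.exp (-β)) e * Tmat ends q (1 - Real.exp (-β)) e' =
        Tmat ends q (1 - Real.exp (-β)) e' * Tmat ends q (1 - Real.exp (-β)) e) ∧
    (∀ l : List E, l.Nodup → (∀ e : E, e ∈ l) →
      Matrix.of (PSWRC ends (1 - Real.exp (-β)) q) =
        Mmat ends q * (l.map (Tmat ends q (1 - Real.exp (-β)))).prod * Mstar V E q) ∧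
    (Matrix.of (PSBRC ends (1 - Real.exp (-β)) q) =
      (Fintype.card E : ℝ)⁻¹ •
        ∑ e : E, Mmat ends q * Tmat ends q (1 - Real.exp (-β)) e * Mstar V E q) :=
  sw_sb_joint_representation_general ends q hq β
end
end

section
/- Let H₁ and H₂ be Hilbert spaces, R : H₂ → H₁ a bounded linear operator with adjoint R*, and T : H₂ → H₂ a bounded self-adjoint positive operator (⟨Tg, g⟩ ≥ 0 for all g ∈ H₂). Then for every k ∈ ℕ, ‖R T^{k+1} R*‖ ≤ ‖T‖ · ‖R T^k R*‖, where ‖·‖ denotes the operator norm. -/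
/-!
Positivity of `T` gives the Loewner inequality `T ^ (k + 1) ≤ ‖T‖ • T ^ k`: for `k = 2m`
conjugate `T ≤ ‖T‖ • 1` by `T ^ m`, for `k = 2m + 1` conjugate `T ^ 2 ≤ ‖T‖ • T` by `T ^ m`.
Conjugation by `R` preserves the Loewner order, and on positive operators the norm is monotone,
being the supremum of the Rayleigh quotient.
-/

namespace ContinuousLinearMap

open RCLike InnerProductSpace

variable {𝕜 E F : Type*} [RCLike 𝕜] [NormedAddCommGroup E] [InnerProductSpace 𝕜 E]
  [NormedAddCommGroup F] [InnerProductSpace 𝕜 F]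

lemma IsPositive.norm_le_norm_of_le {A B : E →L[𝕜] E} (hA : A.IsPositive) (hAB : A ≤ B) :
    ‖A‖ ≤ ‖B‖ := by
  rw [A.norm_eq_iSup_rayleighQuotient hA.isSymmetric]
  refine ciSup_le fun x => ?_
  have hquad : re ⟪A x, x⟫_𝕜 ≤ re ⟪B x, x⟫_𝕜 := by
    simpa [inner_sub_left] using hAB.re_inner_nonneg_left x
  calc |A.rayleighQuotient x| = A.rayleighQuotient x :=
        abs_of_nonneg (div_nonneg (hA.re_inner_nonneg_left x) (sq_nonneg _))
    _ ≤ B.rayleighQuotient x := div_le_div_of_nonneg_right hquad (sq_nonneg _)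
    _ ≤ ‖B‖ := (le_abs_self _).trans (B.rayleighQuotient_le_norm x)

lemma _root_.LinearMap.IsSymmetric.le_norm_smul_one {T : E →L[𝕜] E} (hT : T.IsSymmetric) :
    T ≤ (‖T‖ : 𝕜) • 1 := by
  refine ⟨(isPositive_one.isSymmetric.smul (conj_ofReal _)).sub hT, fun x => ?_⟩
  have hquad : re ⟪T x, x⟫_𝕜 ≤ ‖T‖ * ‖x‖ ^ 2 :=
    calc re ⟪T x, x⟫_𝕜 ≤ ‖T x‖ * ‖x‖ := re_inner_le_norm _ _
      _ ≤ ‖T‖ * ‖x‖ * ‖x‖ := by gcongr; exact T.le_opNorm x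
      _ = ‖T‖ * ‖x‖ ^ 2 := by ring
  simpa [reApplyInnerSelf_apply, inner_sub_left, inner_smul_left, inner_self_eq_norm_sq]
    using hquad

lemma IsPositive.norm_apply_sq_le {T : E →L[𝕜] E} (hT : T.IsPositive) (x : E) :
    ‖T x‖ ^ 2 ≤ ‖T‖ * re ⟪T x, x⟫_𝕜 := by
  rcases (norm_nonneg T).eq_or_lt with hT0 | hTpos
  · simp [norm_eq_zero.1 hT0.symm]
  -- Expand `0 ≤ re ⟪T y, y⟫` at `y = x - ‖T‖⁻¹ • T x`.
  set t : ℝ := ‖T‖⁻¹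
  have ht : t * ‖T‖ = 1 := inv_mul_cancel₀ hTpos.ne'
  have hsymm : ⟪T (T x), x⟫_𝕜 = ⟪T x, T x⟫_𝕜 := hT.inner_left_eq_inner_right (T x) x
  have hpos : t * (‖T x‖ ^ 2 - t * re ⟪T (T x), T x⟫_𝕜) ≤ re ⟪T x, x⟫_𝕜 - t * ‖T x‖ ^ 2 := by
    simpa [inner_sub_left, inner_sub_right, inner_smul_left, inner_smul_right, hsymm] using
      hT.re_inner_nonneg_left (x - (t : 𝕜) • T x)
  have hquad : t ^ 2 * re ⟪T (T x), T x⟫_𝕜 ≤ t * ‖T x‖ ^ 2 :=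
    calc t ^ 2 * re ⟪T (T x), T x⟫_𝕜 ≤ t ^ 2 * (‖T (T x)‖ * ‖T x‖) := by
          gcongr; exact re_inner_le_norm _ _
      _ ≤ t ^ 2 * (‖T‖ * ‖T x‖ * ‖T x‖) := by gcongr; exact T.le_opNorm _
      _ = t * ‖T x‖ ^ 2 := by linear_combination (t * ‖T x‖ ^ 2) * ht
  calc ‖T x‖ ^ 2 = ‖T‖ * (t * ‖T x‖ ^ 2) := by rw [← mul_assoc, mul_comm ‖T‖, ht, one_mul]
    _ ≤ ‖T‖ * re ⟪T x, x⟫_𝕜 := by gcongr; linarith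

lemma IsPositive.sq_le_norm_smul {T : E →L[𝕜] E} (hT : T.IsPositive) :
    T ^ 2 ≤ (‖T‖ : 𝕜) • T := by
  refine ⟨(hT.isSymmetric.smul (conj_ofReal _)).sub (hT.isSymmetric.pow 2), fun x => ?_⟩
  have hsq : re ⟪T (T x), x⟫_𝕜 = ‖T x‖ ^ 2 := by
    rw [hT.inner_left_eq_inner_right, inner_self_eq_norm_sq]
  simpa [reApplyInnerSelf_apply, inner_sub_left, inner_smul_left, hsq] using
    hT.norm_apply_sq_le x

variable [CompleteSpace E]

lemma conj_adjoint_le_conj_adjoint [CompleteSpace F] {A B : E →L[𝕜] E}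
    (hAB : A ≤ B) (S : E →L[𝕜] F) : S ∘L A ∘L adjoint S ≤ S ∘L B ∘L adjoint S := by
  simpa [le_def, comp_sub, sub_comp] using hAB.conj_adjoint S

lemma _root_.IsSelfAdjoint.pow_comp_comp_adjoint_pow {T : E →L[𝕜] E} (hT : IsSelfAdjoint T)
    (m r : ℕ) : (T ^ m) ∘L (T ^ r) ∘L adjoint (T ^ m) = T ^ (2 * m + r) := by
  rw [(hT.pow m).adjoint_eq, ← mul_def, ← mul_def, ← pow_add, ← pow_add]
  congr 1
  omega

lemma IsPositive.pow {T : E →L[𝕜] E} (hT : T.IsPositive) (n : ℕ) : (T ^ n).IsPositive := by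
  have hconj := hT.isSelfAdjoint.pow_comp_comp_adjoint_pow
  obtain ⟨m, rfl | rfl⟩ := n.even_or_odd'
  · rw [← add_zero (2 * m), ← hconj, pow_zero]
    exact isPositive_one.conj_adjoint (T ^ m)
  · rw [← hconj, pow_one]
    exact hT.conj_adjoint (T ^ m)

lemma IsPositive.pow_succ_le_norm_smul_pow {T : E →L[𝕜] E} (hT : T.IsPositive) (k : ℕ) :
    T ^ (k + 1) ≤ (‖T‖ : 𝕜) • T ^ k := by
  have hconj := hT.isSelfAdjoint.pow_comp_comp_adjoint_pow
  obtain ⟨m, rfl | rfl⟩ := k.even_or_odd'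
  · rw [← add_zero (2 * m), ← hconj, add_zero, ← hconj, pow_one, pow_zero, ← comp_smul,
      ← smul_comp]
    exact conj_adjoint_le_conj_adjoint hT.isSymmetric.le_norm_smul_one (T ^ m)
  · rw [add_assoc, ← hconj, ← hconj, pow_one, ← comp_smul, ← smul_comp]
    exact conj_adjoint_le_conj_adjoint hT.sq_le_norm_smul (T ^ m)

end ContinuousLinearMap

open ContinuousLinearMap

/-- For a bounded operator `R : H₂ → H₁` and a bounded
self-adjoint positive operator `T` on `H₂`,
`‖R T^{k+1} R*‖ ≤ ‖T‖ · ‖R T^k R*‖` for every `k ∈ ℕ`. -/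
theorem norm_RTk_monotone
    {H₁ H₂ : Type*} [NormedAddCommGroup H₁] [InnerProductSpace ℝ H₁] [CompleteSpace H₁]
    [NormedAddCommGroup H₂] [InnerProductSpace ℝ H₂] [CompleteSpace H₂]
    (R : H₂ →L[ℝ] H₁) (T : H₂ →L[ℝ] H₂)
    (hT : IsSelfAdjoint T) (hTpos : ∀ g : H₂, 0 ≤ (inner ℝ (T g) g : ℝ)) (k : ℕ) :
    ‖R ∘L (T ^ (k + 1)) ∘L adjoint R‖ ≤ ‖T‖ * ‖R ∘L (T ^ k) ∘L adjoint R‖ := by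
  have hpos : T.IsPositive := (isPositive_iff' T).2 ⟨hT, hTpos⟩
  calc ‖R ∘L (T ^ (k + 1)) ∘L adjoint R‖
      ≤ ‖R ∘L (‖T‖ • T ^ k) ∘L adjoint R‖ :=
        ((hpos.pow (k + 1)).conj_adjoint R).norm_le_norm_of_le
          (conj_adjoint_le_conj_adjoint (hpos.pow_succ_le_norm_smul_pow k) R)
    _ = ‖T‖ * ‖R ∘L (T ^ k) ∘L adjoint R‖ := by
        rw [smul_comp, comp_smul, norm_smul, norm_norm]
end

section
/- Let H₁ and H₂ be Hilbert spaces, R : H₂ → H₁ a bounded linear operator with ‖R R*‖ ≤ 1, and T : H₂ → H₂ a bounded self-adjoint positive operator. Then for every k ∈ ℕ, ‖R T R*‖^{2^k} ≤ ‖R T^{2^k} R*‖. -/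
open ContinuousLinearMap

/-!
Since `‖R‖² = ‖R R*‖ ≤ 1`, the C⋆-identity gives, for self-adjoint `S`,
`‖R S R*‖² ≤ ‖R S‖² = ‖(R S)(R S)*‖ = ‖R S² R*‖`.
Applying this to `S = T^{2^k}` and inducting on `k` squares the exponent at each step.
-/

namespace ContinuousLinearMap

variable {𝕜 E F : Type*} [RCLike 𝕜]
  [NormedAddCommGroup E] [InnerProductSpace 𝕜 E] [CompleteSpace E]
  [NormedAddCommGroup F] [InnerProductSpace 𝕜 F] [CompleteSpace F]

theorem norm_comp_adjoint_self (A : E →L[𝕜] F) :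
    ‖A ∘L adjoint A‖ = ‖A‖ * ‖A‖ := by
  simpa only [adjoint_adjoint, LinearIsometryEquiv.norm_map] using
    norm_adjoint_comp_self (adjoint A)

theorem norm_le_one_of_norm_comp_adjoint_le_one {A : E →L[𝕜] F}
    (hA : ‖A ∘L adjoint A‖ ≤ 1) : ‖A‖ ≤ 1 := by
  rw [norm_comp_adjoint_self] at hA
  nlinarith [norm_nonneg A]

theorem norm_conj_adjoint_sq_le {R : E →L[𝕜] F} (hR : ‖R‖ ≤ 1)
    {S : E →L[𝕜] E} (hS : IsSelfAdjoint S) :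
    ‖R ∘L S ∘L adjoint R‖ ^ 2 ≤ ‖R ∘L (S ^ 2) ∘L adjoint R‖ := by
  have hRS : (R ∘L S) ∘L adjoint (R ∘L S) = R ∘L (S ^ 2) ∘L adjoint R := by
    rw [adjoint_comp, hS.adjoint_eq, pow_two, mul_def]
    rfl
  have hR_adj : ‖adjoint R‖ ≤ 1 := by rwa [LinearIsometryEquiv.norm_map]
  calc ‖R ∘L S ∘L adjoint R‖ ^ 2 = ‖(R ∘L S) ∘L adjoint R‖ ^ 2 := rfl
    _ ≤ (‖R ∘L S‖ * ‖adjoint R‖) ^ 2 := by gcongr; exact opNorm_comp_le _ _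
    _ ≤ ‖R ∘L S‖ ^ 2 := by
        gcongr
        exact mul_le_of_le_one_right (norm_nonneg _) hR_adj
    _ = ‖R ∘L (S ^ 2) ∘L adjoint R‖ := by rw [← hRS, norm_comp_adjoint_self, pow_two]

end ContinuousLinearMap

theorem norm_RTR_pow_two_pow_le_general
    {H₁ H₂ : Type*} [NormedAddCommGroup H₁] [InnerProductSpace ℝ H₁] [CompleteSpace H₁]
    [NormedAddCommGroup H₂] [InnerProductSpace ℝ H₂] [CompleteSpace H₂]
    (R : H₂ →L[ℝ] H₁) (hR : ‖R ∘L adjoint R‖ ≤ 1) (T : H₂ →L[ℝ] H₂)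
    (hT : IsSelfAdjoint T) (k : ℕ) :
    ‖R ∘L T ∘L adjoint R‖ ^ (2 ^ k) ≤ ‖R ∘L (T ^ (2 ^ k)) ∘L adjoint R‖ := by
  have hR₁ := norm_le_one_of_norm_comp_adjoint_le_one hR
  induction k with
  | zero => simp
  | succ k ih =>
    calc ‖R ∘L T ∘L adjoint R‖ ^ 2 ^ (k + 1)
        = (‖R ∘L T ∘L adjoint R‖ ^ 2 ^ k) ^ 2 := by rw [pow_succ, pow_mul]
      _ ≤ ‖R ∘L (T ^ 2 ^ k) ∘L adjoint R‖ ^ 2 := by gcongr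
      _ ≤ ‖R ∘L ((T ^ 2 ^ k) ^ 2) ∘L adjoint R‖ := norm_conj_adjoint_sq_le hR₁ (hT.pow _)
      _ = ‖R ∘L (T ^ 2 ^ (k + 1)) ∘L adjoint R‖ := by rw [pow_succ 2 k, pow_mul]

/-- For a bounded operator `R : H₂ → H₁` with `‖R R*‖ ≤ 1` and a
bounded self-adjoint positive operator `T` on `H₂`,
`‖R T R*‖^{2^k} ≤ ‖R T^{2^k} R*‖` for every `k ∈ ℕ`. -/
theorem norm_RTR_pow_two_pow_le
    {H₁ H₂ : Type*} [NormedAddCommGroup H₁] [InnerProductSpace ℝ H₁] [CompleteSpace H₁]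
    [NormedAddCommGroup H₂] [InnerProductSpace ℝ H₂] [CompleteSpace H₂]
    (R : H₂ →L[ℝ] H₁) (hR : ‖R ∘L adjoint R‖ ≤ 1) (T : H₂ →L[ℝ] H₂)
    (hT : IsSelfAdjoint T) (hTpos : ∀ g : H₂, 0 ≤ (inner ℝ (T g) g : ℝ)) (k : ℕ) :
    ‖R ∘L T ∘L adjoint R‖ ^ (2 ^ k) ≤ ‖R ∘L (T ^ (2 ^ k)) ∘L adjoint R‖ :=
  norm_RTR_pow_two_pow_le_general R hR T hT k
end
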